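/- arXiv:1711.05624 — 5 statements merged into one kernel-verified Lean document; each statement's English description precedes it below -/
import Mathlib

section
/- For every positive integer r there exist constants C_r, c_r, K_r ∈ (0, ∞) and n_0(r) ∈ ℕ such that the following holds. Let n ≥ n_0(r), m = ⌈C_r n^{1−1/r}⌉ and N = n^m. Let H = ([n], E) be a 2r-uniform hypergraph. Then there exists a symmetric matrix A ∈ ℝ^{N×N} with nonnegative integer entries such that ‖A‖ ≤ K_r · Δ(H) (operator norm) and, for every x ∈ {−1,1}^n, p_H(x) = (n / (c_r N)) · ⟨A x^{⊗m}, x^{⊗m}⟩, where x^{⊗m} ∈ ℝ^{[n]^m} is the vector with coordinates (x^{⊗m})_u = Π_{i=1}^m x_{u_i} for u ∈ [n]^m. -/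
/-!
Split every edge `e` into halves `{a₁, …, a_r}` and `{b₁, …, b_r}` and let `σ_e` swap `aₖ ↔ bₖ`.
If `z ∈ [n]^m` takes every value `aₖ` exactly once and no other value in `e`, then
`x^{σ_e ∘ z} x^z = x^e` for `x ∈ {±1}^n`, since the coordinates of `z` outside `e` occur twice.
Putting a `1` at `(z, σ_e ∘ z)` and at its transpose for `n^{m-1}` such `z` per edge gives
`⟨A x^{⊗m}, x^{⊗m}⟩ = 2 n^{m-1} p_H(x)`; for `m ≈ C n^{1-1/r}` there are about
`m^r n^{m-r} ≥ 2 n^{m-1}` candidates `z` per edge.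

Row `z` of `A` has at most two entries per edge that `z` meets in at least `r` vertices, so only
rows of load `O(Δ)` are used. Summing the load over the `z` meeting a fixed edge `e` counts pairs
of edges: `O(nΔ)` edges disjoint from `e`, each met together with `e` by a fraction
`(m/n)^{2r} ≈ n^{-2}` of all `z`, and `O(Δ)` edges meeting `e`. By Markov's inequality at most
`n^{m-1}/2` candidates `z`, and as many `σ_e ∘ z`, are overloaded, so enough pairs survive, and
row sums `O(Δ)` bound the norm (Schur test).
-/

noncomputable def opNorm {ι : Type*} [Fintype ι] (A : Matrix ι ι ℝ) : ℝ :=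
  sSup {c : ℝ | ∃ x y : ι → ℝ,
    (∑ i, x i ^ 2) ≤ 1 ∧ (∑ i, y i ^ 2) ≤ 1 ∧ c = |∑ i, ∑ j, A i j * x j * y i|}

open Finset

section SchurTest

variable {ι : Type*} [Fintype ι]

lemma sum_sum_mul_sq_le_of_sum_le (A : Matrix ι ι ℝ) {R : ℝ} (hR : 0 ≤ R)
    (hrow : ∀ i, ∑ j, A i j ≤ R) {y : ι → ℝ} (hy : ∑ i, y i ^ 2 ≤ 1) :
    ∑ i, ∑ j, A i j * y i ^ 2 ≤ R :=
  calc ∑ i, ∑ j, A i j * y i ^ 2 = ∑ i, (∑ j, A i j) * y i ^ 2 := by simp only [sum_mul]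
    _ ≤ ∑ i, R * y i ^ 2 := by gcongr with i; exact hrow i
    _ = R * ∑ i, y i ^ 2 := by rw [mul_sum]
    _ ≤ R := mul_le_of_le_one_right hR hy

theorem opNorm_le_of_sum_le (A : Matrix ι ι ℝ) {R : ℝ} (hR : 0 ≤ R)
    (hA : ∀ i j, 0 ≤ A i j) (hrow : ∀ i, ∑ j, A i j ≤ R)
    (hcol : ∀ j, ∑ i, A i j ≤ R) : opNorm A ≤ R := by
  refine Real.sSup_le ?_ hR
  rintro _ ⟨x, y, hx, hy, rfl⟩
  have hy' := sum_sum_mul_sq_le_of_sum_le A hR hrow hy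
  have hx' := sum_sum_mul_sq_le_of_sum_le A.transpose hR hcol hx
  rw [sum_comm] at hx'
  calc |∑ i, ∑ j, A i j * x j * y i| ≤ ∑ i, ∑ j, |A i j * x j * y i| :=
        (abs_sum_le_sum_abs _ _).trans (sum_le_sum fun i _ => abs_sum_le_sum_abs _ _)
    _ ≤ ∑ i, ∑ j, (A i j * x j ^ 2 + A i j * y i ^ 2) / 2 := by
        gcongr with i _ j _
        rw [abs_mul, abs_mul, abs_of_nonneg (hA i j), ← sq_abs (x j), ← sq_abs (y i)]
        nlinarith [mul_nonneg (hA i j) (sq_nonneg (|x j| - |y i|))]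
    _ = ((∑ i, ∑ j, A i j * x j ^ 2) + ∑ i, ∑ j, A i j * y i ^ 2) / 2 := by
        simp only [← sum_div, sum_add_distrib]
    _ ≤ R := by simp only [Matrix.transpose_apply] at hx'; linarith

theorem opNorm_natCast_le_of_sum_le {B : ι → ι → ℕ} (hB : ∀ u v, B u v = B v u) {R : ℕ}
    (hrow : ∀ u, ∑ v, B u v ≤ R) : opNorm (Matrix.of fun u v => (B u v : ℝ)) ≤ R := by
  have hrow' (u : ι) : ∑ v, (B u v : ℝ) ≤ R := by exact_mod_cast hrow u
  refine opNorm_le_of_sum_le _ (Nat.cast_nonneg R) (fun _ _ => Nat.cast_nonneg _) hrow' fun v => ?_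
  simpa only [Matrix.of_apply, hB _ v] using hrow' v

end SchurTest

section Degree

variable {V : Type*} [Fintype V] [DecidableEq V]

def maxDegree (E : Multiset (Finset V)) : ℕ := univ.sup fun w => E.countP (w ∈ ·)

lemma countP_mem_le_maxDegree (E : Multiset (Finset V)) (w : V) :
    E.countP (w ∈ ·) ≤ maxDegree E :=
  le_sup (f := fun w => E.countP (w ∈ ·)) (mem_univ w)

lemma countP_not_disjoint_le (s : Finset V) (E : Multiset (Finset V)) :
    E.countP (¬Disjoint s ·) ≤ #s * maxDegree E := by
  refine le_trans ?_ (sum_le_card_nsmul s _ _ fun w _ => countP_mem_le_maxDegree E w)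
  induction E using Multiset.induction_on with
  | empty => simp
  | cons e E ih =>
    simp only [Multiset.countP_cons, sum_add_distrib]
    gcongr
    by_cases h : Disjoint s e
    · simp [h]
    · simpa [h] using not_disjoint_iff_nonempty_inter.mp h

lemma card_le_mul_maxDegree {E : Multiset (Finset V)} (hE : ∀ e ∈ E, e.Nonempty) :
    Multiset.card E ≤ Fintype.card V * maxDegree E := by
  have : E.countP (¬Disjoint univ ·) = Multiset.card E :=
    Multiset.countP_eq_card.mpr fun e he =>
      not_disjoint_iff_nonempty_inter.mpr (by simpa using hE e he)
  simpa [this] using countP_not_disjoint_le univ E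

end Degree

section Hits

variable {ι κ V : Type*} [Fintype ι] [DecidableEq V]

def hits (e : Finset V) (z : ι → V) : ℕ := #{w ∈ e | ∃ i, z i = w}

lemma card_le_hits [Fintype κ] (a : κ ↪ V) {e : Finset V} (hae : ∀ k, a k ∈ e)
    {z : ι → V} (hz : ∀ k, ∃ i, z i = a k) : Fintype.card κ ≤ hits e z := by
  rw [← card_univ, ← card_map a]
  refine card_le_card fun w hw => ?_
  obtain ⟨k, -, rfl⟩ := mem_map.mp hw
  exact mem_filter.mpr ⟨hae k, hz k⟩

end Hits

section Extensions

variable {ι κ V : Type*} [Fintype ι] [DecidableEq ι] [Fintype κ]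

noncomputable def extensions (P : κ ↪ ι) (a : κ → V) (U : Finset V) : Finset (ι → V) :=
  Fintype.piFinset fun j => if h : ∃ k, P k = j then {a h.choose} else U

lemma mem_extensions {P : κ ↪ ι} {a : κ → V} {U : Finset V} {z : ι → V} :
    z ∈ extensions P a U ↔
      (∀ k, z (P k) = a k) ∧ ∀ j, (∀ k, P k ≠ j) → z j ∈ U := by
  simp only [extensions, Fintype.mem_piFinset]
  constructor
  · intro h
    refine ⟨fun k => ?_, fun j hj => by simpa [not_exists.mpr hj] using h j⟩
    have hk : ∃ k', P k' = P k := ⟨k, rfl⟩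
    simpa [hk, P.injective hk.choose_spec] using h (P k)
  · rintro ⟨hP, hU⟩ j
    split_ifs with h
    · rw [mem_singleton, ← hP]
      exact congrArg z h.choose_spec.symm
    · exact hU j (not_exists.mp h)

lemma card_extensions (P : κ ↪ ι) (a : κ → V) (U : Finset V) :
    #(extensions P a U) = #U ^ (Fintype.card ι - Fintype.card κ) := by
  have hrange : #{j | ∃ k, P k = j} = Fintype.card κ := by
    rw [show ({j | ∃ k, P k = j} : Finset ι) = univ.map P by ext; simp, card_map, card_univ]
  rw [extensions, Fintype.card_piFinset, ← card_univ (α := ι),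
    ← card_filter_add_card_filter_not (s := univ) (fun j => ∃ k, P k = j), hrange,
    Nat.add_sub_cancel_left, ← prod_const,
    ← prod_filter_mul_prod_filter_not univ (fun j => ∃ k, P k = j),
    prod_eq_one fun j hj => by simp [(mem_filter.mp hj).2], one_mul]
  exact prod_congr rfl fun j hj => by simp [(mem_filter.mp hj).2]

variable [DecidableEq V] [Fintype V]

lemma card_filter_forall_exists_le (S : Finset V) :
    #{z : ι → V | ∀ w ∈ S, ∃ i, z i = w} ≤
      Fintype.card ι ^ #S * Fintype.card V ^ (Fintype.card ι - #S) := by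
  calc #{z : ι → V | ∀ w ∈ S, ∃ i, z i = w}
      ≤ #((univ : Finset (S ↪ ι)).biUnion fun g => extensions g Subtype.val univ) := by
        refine card_le_card fun z hz => ?_
        simp only [mem_filter, mem_univ, true_and] at hz
        choose g hg using fun w : S => hz w w.2
        have hinj : Function.Injective g := fun w w' h => Subtype.ext (by rw [← hg, h, hg])
        simp only [mem_biUnion, mem_univ, true_and, mem_extensions]
        exact ⟨⟨g, hinj⟩, hg, fun _ _ => trivial⟩
    _ ≤ ∑ g : S ↪ ι, #(extensions g Subtype.val univ) := card_biUnion_le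
    _ = (Fintype.card ι).descFactorial #S * Fintype.card V ^ (Fintype.card ι - #S) := by
        simp [card_extensions, Fintype.card_embedding_eq]
    _ ≤ _ := Nat.mul_le_mul_right _ (Nat.descFactorial_le_pow _ _)

lemma card_filter_le_hits_and_le_hits {e e' : Finset V} (h : Disjoint e e') (r r' : ℕ) :
    #{z : ι → V | r ≤ hits e z ∧ r' ≤ hits e' z} ≤ (#e).choose r * (#e').choose r' *
      (Fintype.card ι ^ (r + r') * Fintype.card V ^ (Fintype.card ι - (r + r'))) := by
  calc #{z : ι → V | r ≤ hits e z ∧ r' ≤ hits e' z}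
      ≤ #((e.powersetCard r ×ˢ e'.powersetCard r').biUnion
          fun S => {z : ι → V | ∀ w ∈ S.1 ∪ S.2, ∃ i, z i = w}) := by
        refine card_le_card fun z hz => ?_
        simp only [mem_filter, mem_univ, true_and] at hz
        obtain ⟨S, hS, rfl⟩ := exists_subset_card_eq hz.1
        obtain ⟨S', hS', rfl⟩ := exists_subset_card_eq hz.2
        simp only [mem_biUnion, mem_product, mem_powersetCard, mem_filter, mem_univ, true_and]
        refine ⟨(S, S'), ⟨⟨hS.trans (filter_subset _ _), rfl⟩,
          hS'.trans (filter_subset _ _), rfl⟩, fun w hw => ?_⟩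
        rcases mem_union.mp hw with hw | hw
        · exact (mem_filter.mp (hS hw)).2
        · exact (mem_filter.mp (hS' hw)).2
    _ ≤ ∑ S ∈ e.powersetCard r ×ˢ e'.powersetCard r',
          #{z : ι → V | ∀ w ∈ S.1 ∪ S.2, ∃ i, z i = w} := card_biUnion_le
    _ ≤ #(e.powersetCard r ×ˢ e'.powersetCard r') •
          (Fintype.card ι ^ (r + r') * Fintype.card V ^ (Fintype.card ι - (r + r'))) := by
        refine sum_le_card_nsmul _ _ _ fun S hS => ?_
        simp only [mem_product, mem_powersetCard] at hS
        have hcard : #(S.1 ∪ S.2) = r + r' := by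
          rw [card_union_of_disjoint (h.mono hS.1.1 hS.2.1), hS.1.2, hS.2.2]
        simpa [hcard] using card_filter_forall_exists_le (ι := ι) (S.1 ∪ S.2)
    _ = _ := by rw [card_product, card_powersetCard, card_powersetCard, smul_eq_mul]

lemma card_filter_le_hits (e : Finset V) (r : ℕ) :
    #{z : ι → V | r ≤ hits e z} ≤
      (#e).choose r * (Fintype.card ι ^ r * Fintype.card V ^ (Fintype.card ι - r)) := by
  simpa using card_filter_le_hits_and_le_hits (ι := ι) (disjoint_empty_right e) r 0

end Extensions

section EdgeSwap

variable {κ V : Type*} [DecidableEq V] {e : Finset V} (s : κ ⊕ κ ≃ e)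

def edgeSwap : Equiv.Perm V :=
  Equiv.Perm.ofSubtype (s.symm.trans ((Equiv.sumComm κ κ).trans s))

lemma edgeSwap_apply_inl (k : κ) : edgeSwap s (s (.inl k)) = s (.inr k) := by
  simp [edgeSwap, Equiv.Perm.ofSubtype_apply_of_mem _ (s (.inl k)).2]

lemma edgeSwap_apply_of_notMem {w : V} (hw : w ∉ e) : edgeSwap s w = w :=
  Equiv.Perm.ofSubtype_apply_of_not_mem _ hw

variable {ι : Type*} [Fintype ι] [DecidableEq ι] [Fintype κ] [Fintype V]

/-- The candidates `z` of the proof idea for the edge `e`, split into halves by `s`. -/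
noncomputable def halfPlacements : Finset (ι → V) :=
  univ.biUnion fun P : κ ↪ ι => extensions P (fun k => s (.inl k)) eᶜ

lemma card_halfPlacements :
    #(halfPlacements (ι := ι) s) =
      (Fintype.card ι).descFactorial (Fintype.card κ) *
        (Fintype.card V - #e) ^ (Fintype.card ι - Fintype.card κ) := by
  rw [halfPlacements, card_biUnion]
  · simp [card_extensions, card_compl, Fintype.card_embedding_eq]
  intro P _ P' _ hPP'
  refine disjoint_left.mpr fun z hz hz' => hPP' (DFunLike.ext _ _ fun k => ?_)
  rw [mem_extensions] at hz hz'
  obtain ⟨k', hk'⟩ : ∃ k', P' k' = P k := by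
    by_contra! h
    simpa [hz.1 k] using hz'.2 (P k) h
  have : s (.inl k') = s (.inl k) := Subtype.ext (by rw [← hz'.1 k', hk', hz.1 k])
  rw [← hk', Sum.inl_injective (s.injective this)]

variable {s}

lemma prod_edgeSwap_mul_prod {M : Type*} [CommMonoid M] {z : ι → V}
    (hz : z ∈ halfPlacements s) {x : V → M} (hx : ∀ w, x w * x w = 1) :
    (∏ j, x (edgeSwap s (z j))) * ∏ j, x (z j) = ∏ w ∈ e, x w := by
  obtain ⟨P, -, hzP⟩ := mem_biUnion.mp hz
  rw [mem_extensions] at hzP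
  rw [← prod_mul_distrib, ← prod_mul_prod_compl (univ.map P), prod_map,
    prod_eq_one (s := (univ.map P)ᶜ), mul_one]
  · calc ∏ k, x (edgeSwap s (z (P k))) * x (z (P k))
        = ∏ k, x (s (.inr k)) * x (s (.inl k)) := by simp [hzP.1, edgeSwap_apply_inl]
      _ = ∏ u, x (s u) := by rw [Fintype.prod_sum_type, prod_mul_distrib, mul_comm]
      _ = ∏ w ∈ e, x w := by rw [Equiv.prod_comp s (fun w => x w), prod_coe_sort]
  · intro j hj
    have hze : z j ∉ e := by
      simpa using hzP.2 j fun k hk => by simp [← hk] at hj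
    rw [edgeSwap_apply_of_notMem s hze, hx]

lemma card_le_hits_of_mem_halfPlacements {z : ι → V} (hz : z ∈ halfPlacements s) :
    Fintype.card κ ≤ hits e z ∧ Fintype.card κ ≤ hits e (fun j => edgeSwap s (z j)) := by
  obtain ⟨P, -, hzP⟩ := mem_biUnion.mp hz
  rw [mem_extensions] at hzP
  constructor
  · refine card_le_hits ((Function.Embedding.inl.trans s.toEmbedding).trans (.subtype _))
      (fun k => (s _).2) fun k => ⟨P k, ?_⟩
    simp [hzP.1]
  · refine card_le_hits ((Function.Embedding.inr.trans s.toEmbedding).trans (.subtype _))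
      (fun k => (s _).2) fun k => ⟨P k, ?_⟩
    simp [hzP.1, edgeSwap_apply_inl]

end EdgeSwap

lemma Multiset.sum_map_ite_eq_countP_mul {α : Type*} (p : α → Prop) [DecidablePred p]
    (E : Multiset α) (c : ℕ) :
    (E.map fun a => if p a then c else 0).sum = E.countP p * c := by
  induction E using Multiset.induction_on with
  | empty => simp
  | cons a E ih => by_cases h : p a <;> simp [h, ih, add_mul, add_comm]

section PairingMatrix

variable {α β : Type*} [DecidableEq α]
  (E : Multiset β) (τ : β → Equiv.Perm α) (W : β → Finset α)

def pairingMatrix (u v : α) : ℕ :=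
  (E.map fun e => (if u ∈ W e ∧ v = τ e u then 1 else 0) +
    (if v ∈ W e ∧ u = τ e v then 1 else 0)).sum

lemma pairingMatrix_comm (u v : α) : pairingMatrix E τ W u v = pairingMatrix E τ W v u := by
  simp only [pairingMatrix, add_comm]

variable [Fintype α]

lemma sum_pairingMatrix (u : α) :
    ∑ v, pairingMatrix E τ W u v =
      (E.map fun e =>
        (if u ∈ W e then 1 else 0) + (if (τ e).symm u ∈ W e then 1 else 0)).sum := by
  simp only [pairingMatrix, ← Multiset.sum_map_sum]
  congr 1
  refine Multiset.map_congr rfl fun e _ => ?_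
  simp [sum_add_distrib, ite_and, eq_comm (a := u), ← Equiv.eq_symm_apply]

lemma sum_pairingMatrix_le (p : β → α → Prop) [∀ e, DecidablePred (p e)] (u : α)
    (hW : ∀ e ∈ E, ∀ z ∈ W e, p e z ∧ p e (τ e z)) :
    ∑ v, pairingMatrix E τ W u v ≤ E.countP (p · u) * 2 := by
  rw [sum_pairingMatrix, ← Multiset.sum_map_ite_eq_countP_mul]
  refine Multiset.sum_map_le_sum_map _ _ fun e he => ?_
  have h1 (hu : u ∈ W e) : p e u := (hW e he u hu).1
  have h2 (hu : (τ e).symm u ∈ W e) : p e u := by simpa using (hW e he _ hu).2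
  split_ifs <;> grind

lemma sum_sum_pairingMatrix_mul {R : Type*} [CommSemiring R] (f : α → R) :
    ∑ u, ∑ v, (pairingMatrix E τ W u v : R) * f v * f u =
      (E.map fun e => 2 * ∑ u ∈ W e, f (τ e u) * f u).sum := by
  simp only [pairingMatrix, Nat.cast_multiset_sum, Multiset.map_map, Function.comp_def,
    ← Multiset.sum_map_mul_right, ← Multiset.sum_map_sum]
  congr 1
  refine Multiset.map_congr rfl fun e _ => ?_
  simp [add_mul, sum_add_distrib, ite_and]
  rw [sum_comm]
  simp [two_mul, mul_comm]

end PairingMatrix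

lemma Multiset.sum_countP_eq_sum_map_card_filter {α β : Type*} (E : Multiset α) (s : Finset β)
    (p : α → β → Prop) [∀ a b, Decidable (p a b)] :
    ∑ b ∈ s, E.countP (p · b) = (E.map fun a => #{b ∈ s | p a b}).sum := by
  induction E using Multiset.induction_on with
  | empty => simp
  | cons a E ih => simp [Multiset.countP_cons, sum_add_distrib, ih, add_comm]

lemma two_mul_card_filter_lt_le {α : Type*} (s : Finset α) (f : α → ℕ) {a N : ℕ}
    (h : ∑ x ∈ s, f x ≤ a * N) : 2 * #{x ∈ s | 2 * a < f x} ≤ N := by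
  have hmarkov : #{x ∈ s | 2 * a < f x} * (2 * a + 1) ≤ a * N :=
    calc #{x ∈ s | 2 * a < f x} * (2 * a + 1) = ∑ x ∈ s with 2 * a < f x, (2 * a + 1) := by
          rw [sum_const, smul_eq_mul]
      _ ≤ ∑ x ∈ s with 2 * a < f x, f x := sum_le_sum fun x hx => (mem_filter.mp hx).2
      _ ≤ ∑ x ∈ s, f x := sum_le_sum_of_subset (filter_subset _ _)
      _ ≤ a * N := h
  nlinarith

section Load

variable {ι V : Type*} [Fintype ι] [DecidableEq ι] [Fintype V] [DecidableEq V]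

def load (E : Multiset (Finset V)) (r : ℕ) (z : ι → V) : ℕ := E.countP (r ≤ hits · z)

lemma sum_load_le {r : ℕ} (hr : 0 < r) {E : Multiset (Finset V)} (hE : ∀ e ∈ E, #e = 2 * r)
    {e : Finset V} (he : #e = 2 * r) :
    ∑ z : ι → V with r ≤ hits e z, load E r z ≤ maxDegree E *
      (Fintype.card V * ((2 * r).choose r ^ 2 *
          (Fintype.card ι ^ (2 * r) * Fintype.card V ^ (Fintype.card ι - 2 * r))) +
        2 * r * ((2 * r).choose r *
          (Fintype.card ι ^ r * Fintype.card V ^ (Fintype.card ι - r)))) := by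
  set D := (2 * r).choose r ^ 2 *
    (Fintype.card ι ^ (2 * r) * Fintype.card V ^ (Fintype.card ι - 2 * r))
  set I := (2 * r).choose r * (Fintype.card ι ^ r * Fintype.card V ^ (Fintype.card ι - r))
  calc ∑ z : ι → V with r ≤ hits e z, load E r z
      = (E.map fun e' => #{z : ι → V | r ≤ hits e z ∧ r ≤ hits e' z}).sum := by
        simp only [load, Multiset.sum_countP_eq_sum_map_card_filter, filter_filter]
    _ ≤ (E.map fun e' => D + if ¬Disjoint e e' then I else 0).sum := by
        refine Multiset.sum_map_le_sum_map _ _ fun e' he' => ?_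
        by_cases hd : Disjoint e e'
        · simpa [hd, D, he, hE e' he', two_mul, sq] using
            card_filter_le_hits_and_le_hits (ι := ι) hd r r
        · simp only [hd, not_false_eq_true, if_true]
          refine le_add_left ((card_le_card ?_).trans (he ▸ card_filter_le_hits e r))
          intro z
          simpa using And.left
    _ = Multiset.card E * D + E.countP (¬Disjoint e ·) * I := by
        rw [Multiset.sum_map_add, Multiset.sum_map_ite_eq_countP_mul]
        simp
    _ ≤ Fintype.card V * maxDegree E * D + #e * maxDegree E * I := by
        gcongr
        · exact card_le_mul_maxDegree fun e' he' => card_pos.mp (by rw [hE e' he']; omega)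
        · exact countP_not_disjoint_le e E
    _ = _ := by rw [he]; ring

end Load

section Construction

variable {ι V : Type*} [Fintype ι] [DecidableEq ι] [Fintype V] [DecidableEq V]

lemma exists_edge_pairing {r : ℕ} {e : Finset V} (he : #e = 2 * r)
    (good : (ι → V) → Prop) [DecidablePred good]
    (hcap : 2 * Fintype.card V ^ (Fintype.card ι - 1) ≤
      (Fintype.card ι).descFactorial r * (Fintype.card V - 2 * r) ^ (Fintype.card ι - r))
    (hbad : 2 * #{z : ι → V | r ≤ hits e z ∧ ¬good z} ≤
      Fintype.card V ^ (Fintype.card ι - 1)) :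
    ∃ (τ : Equiv.Perm (ι → V)) (W : Finset (ι → V)),
      #W = Fintype.card V ^ (Fintype.card ι - 1) ∧
      ∀ z ∈ W, (r ≤ hits e z ∧ good z) ∧ (r ≤ hits e (τ z) ∧ good (τ z)) ∧
        ∀ x : V → ℝ, (∀ w, x w * x w = 1) →
          (∏ j, x (τ z j)) * ∏ j, x (z j) = ∏ w ∈ e, x w := by
  let s : Fin r ⊕ Fin r ≃ e := Fintype.equivOfCardEq (by simp [he, two_mul])
  let τ : Equiv.Perm (ι → V) := Equiv.piCongrRight fun _ => edgeSwap s
  have hτ (z : ι → V) : τ z = fun j => edgeSwap s (z j) := rfl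
  set Z := halfPlacements (ι := ι) s
  have hZ : 2 * Fintype.card V ^ (Fintype.card ι - 1) ≤ #Z := by
    simpa [Z, card_halfPlacements, he] using hcap
  set bad : Finset (ι → V) := {z | r ≤ hits e z ∧ ¬good z}
  set badτ : Finset (ι → V) := {z | r ≤ hits e (τ z) ∧ ¬good (τ z)}
  have hbadτ : #badτ = #bad :=
    card_equiv τ fun z => by simp only [bad, badτ, mem_filter, mem_univ, true_and]
  have hgood : Fintype.card V ^ (Fintype.card ι - 1) ≤
      #{z ∈ Z | good z ∧ good (τ z)} := by
    have hsplit : Z ⊆ {z ∈ Z | good z ∧ good (τ z)} ∪ (bad ∪ badτ) := by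
      intro z hz
      have hhits := card_le_hits_of_mem_halfPlacements hz
      simp only [Fintype.card_fin, ← hτ] at hhits
      by_cases hG : good z <;> by_cases hGτ : good (τ z) <;>
        simp [bad, badτ, hz, hG, hGτ, hhits]
    have := card_le_card hsplit
    have := card_union_le {z ∈ Z | good z ∧ good (τ z)} (bad ∪ badτ)
    have := card_union_le bad badτ
    omega
  obtain ⟨W, hWsub, hW⟩ := exists_subset_card_eq hgood
  refine ⟨τ, W, hW, fun z hz => ?_⟩
  obtain ⟨hzZ, hG, hGτ⟩ := mem_filter.mp (hWsub hz)
  have hhits := card_le_hits_of_mem_halfPlacements hzZ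
  simp only [Fintype.card_fin] at hhits
  exact ⟨⟨hhits.1, hG⟩, ⟨hhits.2, hGτ⟩, fun x hx => prod_edgeSwap_mul_prod hzZ hx⟩

theorem exists_pairing_matrix {r K : ℕ} {E : Multiset (Finset V)} (hE : ∀ e ∈ E, #e = 2 * r)
    (hcap : 2 * Fintype.card V ^ (Fintype.card ι - 1) ≤
      (Fintype.card ι).descFactorial r * (Fintype.card V - 2 * r) ^ (Fintype.card ι - r))
    (hload : ∀ e ∈ E, ∑ z : ι → V with r ≤ hits e z, load E r z ≤
      maxDegree E * (K * Fintype.card V ^ (Fintype.card ι - 1))) :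
    ∃ B : (ι → V) → (ι → V) → ℕ, (∀ u v, B u v = B v u) ∧
      (∀ u, ∑ v, B u v ≤ 4 * K * maxDegree E) ∧
      ∀ x : V → ℝ, (∀ w, x w * x w = 1) →
        ∑ u, ∑ v, (B u v : ℝ) * (∏ j, x (v j)) * ∏ j, x (u j) =
          2 * Fintype.card V ^ (Fintype.card ι - 1) * (E.map fun e => ∏ w ∈ e, x w).sum := by
  let good : (ι → V) → Prop := fun z => load E r z ≤ 2 * (K * maxDegree E)
  have hpair (e) (he : e ∈ E) := exists_edge_pairing (hE e he) good hcap (by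
    simpa [filter_filter, good, not_le, mul_assoc] using
      two_mul_card_filter_lt_le (a := K * maxDegree E) _ _ ((hload e he).trans_eq (by ring)))
  choose! τ W hW using hpair
  refine ⟨pairingMatrix E τ W, pairingMatrix_comm E τ W, fun u => ?_, fun x hx => ?_⟩
  · calc ∑ v, pairingMatrix E τ W u v
        ≤ E.countP (fun e => r ≤ hits e u ∧ good u) * 2 :=
          sum_pairingMatrix_le E τ W (fun e z => r ≤ hits e z ∧ good z) u fun e he z hz =>
            ⟨((hW e he).2 z hz).1, ((hW e he).2 z hz).2.1⟩
      _ ≤ 2 * (K * maxDegree E) * 2 := by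
          by_cases hGu : good u
          · simp only [hGu, and_true]
            exact Nat.mul_le_mul_right 2 hGu
          · simp [hGu]
      _ = 4 * K * maxDegree E := by ring
  · rw [sum_sum_pairingMatrix_mul, ← Multiset.sum_map_mul_left]
    refine congrArg _ (Multiset.map_congr rfl fun e he => ?_)
    rw [sum_congr rfl fun z hz => ((hW e he).2 z hz).2.2 x hx, sum_const, (hW e he).1,
      nsmul_eq_mul]
    push_cast
    ring

end Construction

section Estimates

lemma pow_le_two_mul_sub_pow {n a k : ℕ} (h : 2 * (k * a) ≤ n) : n ^ k ≤ 2 * (n - a) ^ k := by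
  rcases Nat.eq_zero_or_pos k with rfl | hk
  · simp
  have ha : a ≤ n := by nlinarith
  have hbern := pow_add_mul_le_add_pow (R := ℤ) (a := n) (b := -a) (by positivity) (by omega) k
  have hpow : (n : ℤ) ^ k = n * n ^ (k - 1) := by rw [← pow_succ', Nat.sub_add_cancel hk]
  have hka : ((2 * (k * a) : ℕ) : ℤ) * n ^ (k - 1) ≤ n * n ^ (k - 1) := by gcongr
  zify [ha]
  push_cast at hka
  rw [← sub_eq_add_neg] at hbern
  linarith

lemma two_mul_pow_le_descFactorial_mul {n m r : ℕ} (hr : 0 < r)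
    (h8 : 8 ^ r * n ^ (r - 1) ≤ m ^ r) (h4 : 4 * r * m ≤ n) (h2 : 2 * r ≤ m) :
    2 * n ^ (m - 1) ≤ m.descFactorial r * (n - 2 * r) ^ (m - r) := by
  have hdesc : 4 ^ r * n ^ (r - 1) ≤ m.descFactorial r := by
    refine Nat.le_of_mul_le_mul_left ?_ (pow_pos two_pos r)
    calc 2 ^ r * (4 ^ r * n ^ (r - 1)) = 8 ^ r * n ^ (r - 1) := by
          rw [← mul_assoc, ← mul_pow]; norm_num
      _ ≤ (2 * (m + 1 - r)) ^ r := h8.trans (Nat.pow_le_pow_left (by omega) r)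
      _ ≤ 2 ^ r * m.descFactorial r := by
          rw [mul_pow]
          exact Nat.mul_le_mul_left _ (Nat.pow_sub_le_descFactorial m r)
  have hsub : n ^ (m - r) ≤ 2 * (n - 2 * r) ^ (m - r) :=
    pow_le_two_mul_sub_pow (by nlinarith [Nat.sub_le m r])
  have hsplit : n ^ (m - 1) = n ^ (r - 1) * n ^ (m - r) := by rw [← pow_add]; congr 1; omega
  have h4r : 4 ≤ 4 ^ r := Nat.le_self_pow hr.ne' 4
  refine Nat.le_of_mul_le_mul_right ?_ two_pos
  calc 2 * n ^ (m - 1) * 2 ≤ 4 ^ r * n ^ (r - 1) * n ^ (m - r) := by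
        rw [hsplit]; nlinarith [Nat.zero_le (n ^ (r - 1) * n ^ (m - r))]
    _ ≤ m.descFactorial r * (2 * (n - 2 * r) ^ (m - r)) := Nat.mul_le_mul hdesc hsub
    _ = m.descFactorial r * (n - 2 * r) ^ (m - r) * 2 := by ring

lemma sum_load_bound_le {n m r : ℕ} (c : ℕ) (hr : 0 < r) (h9 : m ^ r ≤ 9 ^ r * n ^ (r - 1))
    (h2 : 2 * r ≤ m) :
    n * (c ^ 2 * (m ^ (2 * r) * n ^ (m - 2 * r))) + 2 * r * (c * (m ^ r * n ^ (m - r))) ≤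
      (c ^ 2 * 81 ^ r + 2 * r * c * 9 ^ r) * n ^ (m - 1) := by
  have hsq : m ^ (2 * r) ≤ 81 ^ r * n ^ (2 * (r - 1)) := by
    calc m ^ (2 * r) = (m ^ r) ^ 2 := by ring
      _ ≤ (9 ^ r * n ^ (r - 1)) ^ 2 := Nat.pow_le_pow_left h9 2
      _ = (9 ^ 2) ^ r * n ^ (2 * (r - 1)) := by rw [mul_pow, ← pow_mul, ← pow_mul, ← pow_mul,
          mul_comm r 2, mul_comm (r - 1) 2]
      _ = 81 ^ r * n ^ (2 * (r - 1)) := by norm_num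
  have e1 : n * (n ^ (2 * (r - 1)) * n ^ (m - 2 * r)) = n ^ (m - 1) := by
    rw [← pow_add, ← pow_succ']; congr 1; omega
  have e2 : n ^ (r - 1) * n ^ (m - r) = n ^ (m - 1) := by rw [← pow_add]; congr 1; omega
  calc n * (c ^ 2 * (m ^ (2 * r) * n ^ (m - 2 * r))) + 2 * r * (c * (m ^ r * n ^ (m - r)))
      ≤ n * (c ^ 2 * (81 ^ r * n ^ (2 * (r - 1)) * n ^ (m - 2 * r))) +
          2 * r * (c * (9 ^ r * n ^ (r - 1) * n ^ (m - r))) := by gcongr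
    _ = c ^ 2 * 81 ^ r * (n * (n ^ (2 * (r - 1)) * n ^ (m - 2 * r))) +
          2 * r * c * 9 ^ r * (n ^ (r - 1) * n ^ (m - r)) := by ring
    _ = _ := by rw [e1, e2]; ring

lemma le_of_mul_pow_le {a r n : ℕ} (ha : 0 < a) (hr : 0 < r) (h : (a * r) ^ r ≤ n) : r ≤ n :=
  (Nat.le_mul_of_pos_left r ha).trans ((Nat.le_self_pow hr.ne' _).trans h)

lemma rpow_one_sub_one_div_bounds {r n : ℕ} (hr : 0 < r) (hn : (36 * r) ^ r ≤ n) :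
    1 ≤ (n : ℝ) ^ ((1 : ℝ) - 1 / (r : ℝ)) ∧
      ((n : ℝ) ^ ((1 : ℝ) - 1 / (r : ℝ))) ^ r = (n : ℝ) ^ (r - 1) ∧
      36 * r * (n : ℝ) ^ ((1 : ℝ) - 1 / (r : ℝ)) ≤ n := by
  have hr' : (0 : ℝ) < r := by exact_mod_cast hr
  have hn1 : (1 : ℝ) ≤ n := by exact_mod_cast hr.trans_le (le_of_mul_pow_le (by norm_num) hr hn)
  have hexp : (0 : ℝ) ≤ 1 - 1 / r := by
    rw [sub_nonneg, div_le_one hr']; exact_mod_cast hr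
  refine ⟨Real.one_le_rpow hn1 hexp, ?_, ?_⟩
  · rw [← Real.rpow_natCast, ← Real.rpow_mul (by positivity), ← Real.rpow_natCast]
    congr 1
    rw [Nat.cast_sub hr]
    field_simp
    ring
  · have hroot : (36 * r : ℝ) ≤ (n : ℝ) ^ (1 / (r : ℝ)) := by
      calc (36 * r : ℝ) = (((36 * r : ℕ) : ℝ) ^ r) ^ (1 / (r : ℝ)) := by
            rw [one_div, Real.pow_rpow_inv_natCast (by positivity) hr.ne']; push_cast; ring
        _ ≤ _ := Real.rpow_le_rpow (by positivity) (by exact_mod_cast hn) (by positivity)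
    calc 36 * r * (n : ℝ) ^ ((1 : ℝ) - 1 / (r : ℝ))
        ≤ (n : ℝ) ^ (1 / (r : ℝ)) * (n : ℝ) ^ ((1 : ℝ) - 1 / (r : ℝ)) := by gcongr
      _ = n := by rw [← Real.rpow_add (by positivity)]; norm_num

lemma bounds_of_eq_ceil_rpow {r n m : ℕ} (hr : 0 < r) (hn : (36 * r) ^ r ≤ n)
    (hm : m = ⌈(8 : ℝ) * (n : ℝ) ^ ((1 : ℝ) - 1 / (r : ℝ))⌉₊) :
    8 ^ r * n ^ (r - 1) ≤ m ^ r ∧ m ^ r ≤ 9 ^ r * n ^ (r - 1) ∧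
      4 * r * m ≤ n ∧ 2 * r ≤ m := by
  obtain ⟨hν1, hνr, hνn⟩ := rpow_one_sub_one_div_bounds hr hn
  set ν := (n : ℝ) ^ ((1 : ℝ) - 1 / (r : ℝ))
  have hm8 : 8 * ν ≤ m := hm ▸ Nat.le_ceil _
  have hm9 : (m : ℝ) ≤ 9 * ν := by
    have := Nat.ceil_lt_add_one (show 0 ≤ 8 * ν by positivity)
    rw [← hm] at this
    linarith
  have h8 : 8 ^ r * n ^ (r - 1) ≤ m ^ r := by
    have := pow_le_pow_left₀ (by positivity) hm8 r
    rw [mul_pow, hνr] at this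
    exact_mod_cast this
  refine ⟨h8, ?_, ?_, ?_⟩
  · have := pow_le_pow_left₀ (by positivity) hm9 r
    rw [mul_pow, hνr] at this
    exact_mod_cast this
  · have : (4 * r * m : ℝ) ≤ n := by nlinarith
    exact_mod_cast this
  · refine (Nat.pow_le_pow_iff_left hr.ne').mp (le_trans ?_ h8)
    calc (2 * r) ^ r = 2 ^ r * (r * r ^ (r - 1)) := by
          rw [mul_pow, ← pow_succ', Nat.sub_add_cancel hr]
      _ ≤ 2 ^ r * (4 ^ r * n ^ (r - 1)) := by
          gcongr
          · exact (Nat.lt_pow_self (by norm_num)).le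
          · exact le_of_mul_pow_le (by norm_num) hr hn
      _ = 8 ^ r * n ^ (r - 1) := by rw [← mul_assoc, ← mul_pow]; norm_num

end Estimates

/-- Matrix lemma.  For every positive integer `r` there are constants
`C_r, c_r, K_r > 0` and `n₀(r)` such that for all `n ≥ n₀`, with `m = ⌈C_r n^{1-1/r}⌉`
and `N = n^m`, and every `2r`-uniform hypergraph `H = ([n], E)` (a multiset of
`2r`-element edges), there is a symmetric matrix `A ∈ ℝ^{N×N}` (indexed by `[n]^m`) with
nonnegative integer entries, `‖A‖ ≤ K_r · Δ(H)`, and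
`p_H(x) = (n/(c_r N)) ⟨A x^{⊗m}, x^{⊗m}⟩` for every `x ∈ {-1,1}^n`. -/
theorem matrix_lemma (r : ℕ) (hr : 0 < r) :
    ∃ C c K : ℝ, 0 < C ∧ 0 < c ∧ 0 < K ∧
      ∃ n₀ : ℕ, ∀ n : ℕ, n₀ ≤ n →
        ∀ m : ℕ, m = ⌈C * (n : ℝ) ^ ((1 : ℝ) - 1 / (r : ℝ))⌉₊ →
          ∀ N : ℕ, N = n ^ m →
            ∀ E : Multiset (Finset (Fin n)), (∀ e ∈ E, e.card = 2 * r) →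
              ∃ B : (Fin m → Fin n) → (Fin m → Fin n) → ℕ,
                (∀ u v, B u v = B v u) ∧
                opNorm (Matrix.of fun u v : Fin m → Fin n => (B u v : ℝ)) ≤
                  K * (Finset.univ.sup fun w : Fin n =>
                        Multiset.countP (fun e => w ∈ e) E) ∧
                ∀ x : Fin n → ℝ, (∀ i, x i = 1 ∨ x i = -1) →
                  (E.map fun e => ∏ i ∈ e, x i).sum =
                    ((n : ℝ) / (c * N)) *
                      ∑ u : Fin m → Fin n, ∑ v : Fin m → Fin n,
                        (B u v : ℝ) * (∏ i, x (v i)) * (∏ i, x (u i)) := by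
  set b := (2 * r).choose r
  set L := b ^ 2 * 81 ^ r + 2 * r * b * 9 ^ r
  have hb : 0 < b := Nat.choose_pos (by omega)
  refine ⟨8, 2, (4 * L : ℕ), by norm_num, by norm_num, by positivity, (36 * r) ^ r, ?_⟩
  rintro n hn₀ m hm N rfl E hE
  obtain ⟨h8, h9, h4, h2⟩ := bounds_of_eq_ceil_rpow hr hn₀ hm
  obtain ⟨B, hBsymm, hBrow, hBform⟩ := exists_pairing_matrix (ι := Fin m) (K := L) hE
    (by simpa using two_mul_pow_le_descFactorial_mul hr h8 h4 h2)
    fun e he => (sum_load_le hr hE (hE e he)).trans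
      (Nat.mul_le_mul_left _ (by simpa only [Fintype.card_fin] using sum_load_bound_le b hr h9 h2))
  refine ⟨B, hBsymm, by exact_mod_cast opNorm_natCast_le_of_sum_le hBsymm hBrow, fun x hx => ?_⟩
  have hn0 : (n : ℝ) ≠ 0 := by exact_mod_cast ((pow_pos (by omega) r).trans_le hn₀).ne'
  have hn : (n : ℝ) ^ m = n * n ^ (m - 1) := by rw [← pow_succ', Nat.sub_add_cancel (by omega)]
  rw [hBform x fun w => by rcases hx w with h | h <;> simp [h], Fintype.card_fin,
    Fintype.card_fin, Nat.cast_pow, hn]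
  field_simp
end

section
/- For every S ∈ M, the number of pairs (f, g) ∈ P that cover S equals |P| / |M|; in particular, all sets S ∈ M are covered by the same number of pairs from P. -/
/-- `μ_S(f) = ∑_{T ⊆ S, |T| = r} ∏_{i ∈ T} |f⁻¹(i)|`. -/
def muS (r n m : ℕ) (S : Finset (Fin n)) (f : Fin m → Fin n) : ℕ :=
  ∑ T ∈ S.powersetCard r, ∏ i ∈ T, (Finset.univ.filter fun j => f j = i).card

/-- `φ(f) = ∑_{S ∈ M} μ_S(f)`. -/
def phiM (r n m : ℕ) (M : Finset (Finset (Fin n))) (f : Fin m → Fin n) : ℕ :=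
  ∑ S ∈ M, muS r n m S f

/-- `f` is `ℓ`-good if `1 ≤ φ(f) ≤ ℓ`. -/
def IsGood (r n m : ℕ) (M : Finset (Finset (Fin n))) (ℓ : ℕ) (f : Fin m → Fin n) : Prop :=
  1 ≤ phiM r n m M f ∧ phiM r n m M f ≤ ℓ

/-- `g` complements `f`: there is exactly one `r`-element `I ⊆ [m]` with
`f(I) ∪ g(I) ∈ M` and `g(i) = f(i)` for all `i ∉ I`. -/
def Complements (r n m : ℕ) (M : Finset (Finset (Fin n))) (f g : Fin m → Fin n) : Prop :=
  ∃! I : Finset (Fin m), I.card = r ∧ (I.image f ∪ I.image g) ∈ M ∧ ∀ i ∉ I, g i = f i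

/-- The pair `(f, g)` covers `S` if `f(I) ∪ g(I) = S` for a witnessing `I`. -/
def Covers (r n m : ℕ) (f g : Fin m → Fin n) (S : Finset (Fin n)) : Prop :=
  ∃ I : Finset (Fin m), I.card = r ∧ (I.image f ∪ I.image g) = S ∧ ∀ i ∉ I, g i = f i



/-!
A permutation of `[n]` that permutes the blocks of `M` preserves `φ`, goodness and
complementation, and maps the pairs covering a block `T` bijectively onto the pairs covering its
image. The blocks of `M` are disjoint and of equal size, so any two of them are exchanged by such a
permutation (one fixing everything outside them), hence all blocks are covered by equally many
pairs of `P`. Since every pair of `P` covers exactly one block, these counts add up to `|P|`.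
-/

open Finset Equiv

lemma map_perm_eq_self_of_forall_mem {α : Type*} {σ : Perm α} {U : Finset α}
    (h : ∀ x ∈ U, σ x = x) : U.map σ.toEmbedding = U := by
  refine eq_of_subset_of_card_le (fun y hy => ?_) (card_map _).ge
  obtain ⟨x, hx, rfl⟩ := mem_map.1 hy
  simpa [h x hx] using hx

lemma exists_involutive_perm_map_eq {α : Type*} [DecidableEq α] {S T : Finset α}
    (hST : Disjoint S T) (hcard : S.card = T.card) :
    ∃ σ : Perm α, Function.Involutive σ ∧ S.map σ.toEmbedding = T ∧
      ∀ x ∉ S ∪ T, σ x = x := by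
  induction S using Finset.induction_on generalizing T with
  | empty =>
    refine ⟨1, fun _ => rfl, ?_, fun _ _ => rfl⟩
    rw [card_empty, eq_comm, card_eq_zero] at hcard
    simp [hcard]
  | insert a S haS ih =>
    obtain ⟨b, hb⟩ : T.Nonempty := by rw [← card_pos, ← hcard]; simp
    have haT : a ∉ T := disjoint_left.1 hST (mem_insert_self a S)
    have hbS : b ∉ S := fun h => disjoint_left.1 hST (mem_insert_of_mem h) hb
    obtain ⟨τ, hτ, hτS, hτfix⟩ := ih (T := T.erase b)
      (disjoint_of_subset_left (subset_insert a S) hST |>.mono_right (erase_subset b T))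
      (by rw [card_erase_of_mem hb, ← hcard, card_insert_of_notMem haS]; rfl)
    have hτa : τ a = a := hτfix a (by simp [haS, haT])
    have hτb : τ b = b := hτfix b (by simp [hbS])
    have hswap_fix : ∀ x ∈ T.erase b, swap a b x = x := fun x hx =>
      swap_apply_of_ne_of_ne (ne_of_mem_of_not_mem (mem_of_mem_erase hx) haT) (ne_of_mem_erase hx)
    refine ⟨swap a b * τ, fun x => ?_, ?_, fun x hx => ?_⟩
    · have hcomm : ∀ y, τ (swap a b y) = swap a b (τ y) := fun y => by
        simpa [hτa, hτb] using congrArg (· y) (mul_swap_eq_swap_mul τ a b)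
      simp [hcomm, hτ x]
    · have hmap : S.map (swap a b * τ).toEmbedding =
          (S.map τ.toEmbedding).map (swap a b).toEmbedding := by
        rw [map_map]; rfl
      rw [map_insert, hmap, hτS, map_perm_eq_self_of_forall_mem hswap_fix]
      simp [hτa, insert_erase hb]
    · obtain ⟨⟨hxa, hxS⟩, hxT⟩ : (x ≠ a ∧ x ∉ S) ∧ x ∉ T := by
        simpa only [mem_union, mem_insert, not_or] using hx
      rw [Perm.mul_apply, hτfix x (by simp [hxS, hxT])]
      exact swap_apply_of_ne_of_ne hxa (ne_of_mem_of_not_mem hb hxT).symm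

lemma exists_perm_map_eq_of_mem {α : Type*} [DecidableEq α] {M : Finset (Finset α)} {k : ℕ}
    (hcard : ∀ S ∈ M, S.card = k) (hdisj : (M : Set (Finset α)).Pairwise Disjoint)
    {S T : Finset α} (hS : S ∈ M) (hT : T ∈ M) :
    ∃ σ : Perm α, (∀ U, U.map σ.toEmbedding ∈ M ↔ U ∈ M) ∧ S.map σ.toEmbedding = T := by
  by_cases hST : S = T
  · have h1 : ∀ U : Finset α, U.map (1 : Perm α).toEmbedding = U := fun U =>
      map_perm_eq_self_of_forall_mem fun _ _ => rfl
    exact ⟨1, fun U => by rw [h1], by rw [h1, hST]⟩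
  obtain ⟨σ, hσ, hσS, hσfix⟩ :=
    exists_involutive_perm_map_eq (hdisj hS hT hST) (by rw [hcard S hS, hcard T hT])
  have hσσ : ∀ U : Finset α, (U.map σ.toEmbedding).map σ.toEmbedding = U := by
    intro U
    rw [map_map]
    exact map_perm_eq_self_of_forall_mem (σ := σ * σ) fun x _ => hσ x
  have hmaps : ∀ U ∈ M, U.map σ.toEmbedding ∈ M := by
    intro U hU
    by_cases hUS : U = S
    · rwa [hUS, hσS]
    by_cases hUT : U = T
    · rwa [hUT, ← hσS, hσσ]
    rwa [map_perm_eq_self_of_forall_mem fun x hx => hσfix x ?_]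
    rw [mem_union, not_or]
    exact ⟨disjoint_left.1 (hdisj hU hS hUS) hx, disjoint_left.1 (hdisj hU hT hUT) hx⟩
  exact ⟨σ, fun U => ⟨fun h => hσσ U ▸ hmaps _ h, hmaps U⟩, hσS⟩

section Invariance

variable {r n m : ℕ} {M : Finset (Finset (Fin n))} (σ : Perm (Fin n))

lemma muS_map_comp (S : Finset (Fin n)) (f : Fin m → Fin n) :
    muS r n m (S.map σ.toEmbedding) (σ ∘ f) = muS r n m S f := by
  unfold muS
  rw [powersetCard_map, sum_map]
  refine sum_congr rfl fun T _ => ?_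
  rw [RelEmbedding.coe_toEmbedding, mapEmbedding_apply, prod_map]
  refine prod_congr rfl fun i _ => ?_
  simp [σ.injective.eq_iff]

lemma phiM_comp (hM : ∀ U, U.map σ.toEmbedding ∈ M ↔ U ∈ M) (f : Fin m → Fin n) :
    phiM r n m M (σ ∘ f) = phiM r n m M f :=
  (sum_equiv σ.finsetCongr (fun U => by rw [finsetCongr_apply, hM])
    fun U _ => by rw [finsetCongr_apply, muS_map_comp]).symm

lemma isGood_comp (hM : ∀ U, U.map σ.toEmbedding ∈ M ↔ U ∈ M) (ℓ : ℕ) (f : Fin m → Fin n) :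
    IsGood r n m M ℓ (σ ∘ f) ↔ IsGood r n m M ℓ f := by
  simp only [IsGood, phiM_comp σ hM]

lemma image_comp_union_image_comp (I : Finset (Fin m)) (f g : Fin m → Fin n) :
    I.image (σ ∘ f) ∪ I.image (σ ∘ g) = (I.image f ∪ I.image g).map σ.toEmbedding := by
  rw [map_eq_image, image_union, image_image, image_image]
  rfl

lemma complements_comp (hM : ∀ U, U.map σ.toEmbedding ∈ M ↔ U ∈ M) (f g : Fin m → Fin n) :
    Complements r n m M (σ ∘ f) (σ ∘ g) ↔ Complements r n m M f g := by
  refine existsUnique_congr fun I => ?_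
  simp only [image_comp_union_image_comp, hM, Function.comp_apply, σ.apply_eq_iff_eq]

lemma covers_comp (U : Finset (Fin n)) (f g : Fin m → Fin n) :
    Covers r n m (σ ∘ f) (σ ∘ g) (U.map σ.toEmbedding) ↔ Covers r n m f g U := by
  refine exists_congr fun I => ?_
  simp only [image_comp_union_image_comp, map_inj, Function.comp_apply, σ.apply_eq_iff_eq]

lemma natCard_covering_pairs_map (hM : ∀ U, U.map σ.toEmbedding ∈ M ↔ U ∈ M) (ℓ : ℕ)
    (U : Finset (Fin n)) :
    Nat.card {fg : (Fin m → Fin n) × (Fin m → Fin n) |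
        (IsGood r n m M ℓ fg.1 ∧ Complements r n m M fg.1 fg.2) ∧
          Covers r n m fg.1 fg.2 (U.map σ.toEmbedding)} =
      Nat.card {fg : (Fin m → Fin n) × (Fin m → Fin n) |
        (IsGood r n m M ℓ fg.1 ∧ Complements r n m M fg.1 fg.2) ∧ Covers r n m fg.1 fg.2 U} := by
  let τ : (Fin m → Fin n) ≃ (Fin m → Fin n) := (Equiv.refl _).arrowCongr σ
  refine (Nat.card_congr ((τ.prodCongr τ).subtypeEquiv fun fg => ?_)).symm
  exact (and_congr (and_congr (isGood_comp σ hM ℓ _) (complements_comp σ hM _ _))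
    (covers_comp σ U _ _)).symm

end Invariance

lemma natCard_eq_sum_natCard_of_existsUnique {X β : Type*} [Finite X] (P : X → Prop)
    (C : X → β → Prop) (M : Finset β) (h : ∀ x, P x → ∃! b, b ∈ M ∧ C x b) :
    Nat.card {x | P x} = ∑ b ∈ M, Nat.card {x | P x ∧ C x b} := by
  classical
  have := Fintype.ofFinite X
  simp only [Nat.card_eq_card_toFinset, Set.toFinset_ofPred]
  rw [← card_biUnion]
  · congr 1
    ext x
    simp only [mem_filter, mem_univ, true_and, mem_biUnion]
    exact ⟨fun hx => ((h x hx).exists.imp fun b hb => ⟨hb.1, hx, hb.2⟩),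
      fun ⟨_, _, hx, _⟩ => hx⟩
  · intro b hb b' hb' hne
    refine disjoint_left.2 fun x hx hx' => hne ?_
    simp only [mem_filter, mem_univ, true_and] at hx hx'
    exact (h x hx.1).unique ⟨hb, hx.2⟩ ⟨hb', hx'.2⟩

lemma complements_existsUnique_covers {r n m : ℕ} {M : Finset (Finset (Fin n))}
    {f g : Fin m → Fin n} (h : Complements r n m M f g) :
    ∃! S, S ∈ M ∧ Covers r n m f g S := by
  obtain ⟨I, ⟨hI, hmem, hfix⟩, huniq⟩ := h
  refine ⟨_, ⟨hmem, I, hI, rfl, hfix⟩, ?_⟩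
  rintro _ ⟨hS, J, hJ, rfl, hfixJ⟩
  rw [huniq J ⟨hJ, hS, hfixJ⟩]

theorem pairs_cover_equally_general (r n m : ℕ) (M : Finset (Finset (Fin n)))
    (hcard : ∀ S ∈ M, S.card = 2 * r)
    (hdisj : (M : Set (Finset (Fin n))).Pairwise fun S T => Disjoint S T)
    (S : Finset (Fin n)) (hS : S ∈ M) :
    Nat.card {fg : (Fin m → Fin n) × (Fin m → Fin n) |
        (IsGood r n m M (200 * 4 ^ r) fg.1 ∧ Complements r n m M fg.1 fg.2) ∧
          Covers r n m fg.1 fg.2 S} * M.card =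
      Nat.card {fg : (Fin m → Fin n) × (Fin m → Fin n) |
        IsGood r n m M (200 * 4 ^ r) fg.1 ∧ Complements r n m M fg.1 fg.2} := by
  rw [natCard_eq_sum_natCard_of_existsUnique (X := (Fin m → Fin n) × (Fin m → Fin n))
    (fun fg => IsGood r n m M (200 * 4 ^ r) fg.1 ∧ Complements r n m M fg.1 fg.2)
    (fun fg T => Covers r n m fg.1 fg.2 T) M fun fg hfg => complements_existsUnique_covers hfg.2,
    sum_const_nat fun T hT => ?_, mul_comm]
  obtain ⟨σ, hM, rfl⟩ := exists_perm_map_eq_of_mem hcard hdisj hS hT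
  exact natCard_covering_pairs_map σ hM _ S

/-- Let `M` be a maximal `2r`-matching of `[n]`, `s = 200·4^r`, and let
`P = {(f,g) : f is s-good and g complements f}`.  Then every `S ∈ M` is covered by
exactly `|P|/|M|` pairs of `P`; we state this as `#{(f,g) ∈ P covering S} · |M| = |P|`. -/
theorem pairs_cover_equally (r n m : ℕ) (hr : 0 < r) (M : Finset (Finset (Fin n)))
    (hcard : ∀ S ∈ M, S.card = 2 * r)
    (hdisj : (M : Set (Finset (Fin n))).Pairwise fun S T => Disjoint S T)
    (hmax : ∀ S' : Finset (Fin n), S'.card = 2 * r → (∀ S ∈ M, Disjoint S' S) → S' ∈ M)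
    (S : Finset (Fin n)) (hS : S ∈ M) :
    Nat.card {fg : (Fin m → Fin n) × (Fin m → Fin n) |
        (IsGood r n m M (200 * 4 ^ r) fg.1 ∧ Complements r n m M fg.1 fg.2) ∧
          Covers r n m fg.1 fg.2 S} * M.card =
      Nat.card {fg : (Fin m → Fin n) × (Fin m → Fin n) |
        IsGood r n m M (200 * 4 ^ r) fg.1 ∧ Complements r n m M fg.1 fg.2} :=
  pairs_cover_equally_general r n m M hcard hdisj S hS
end

section
/- For every pair (f, g) ∈ P, the map g is s²-good; that is, if f : [m] → [n] is s-good and g : [m] → [n] complements f, then 1 ≤ φ(g) ≤ s². -/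
set_option maxHeartbeats 1000000

open Finset

/-- Padding: a product over a small subset of `S₀` is bounded by the sum of full-size
products over its extensions inside `Fi`. -/
lemma pad_le {α : Type*} [DecidableEq α] (r : ℕ) (S₀ Fi : Finset α) (a : α → ℕ)
    (hFiS : Fi ⊆ S₀) (hFic : Fi.card = r) (hapos : ∀ i ∈ Fi, 1 ≤ a i)
    (V : Finset α) (hV : V ⊆ S₀) (hVc : V.card ≤ r) :
    ∏ i ∈ V, a i ≤ ∑ T' ∈ (S₀.powersetCard r).filter (fun T' => V ⊆ T' ∧ T' \ V ⊆ Fi),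
      ∏ i ∈ T', a i := by
  classical
  have hsd : r - V.card ≤ (Fi \ V).card := by
    have := Finset.le_card_sdiff V Fi
    omega
  obtain ⟨W, hWsub, hWcard⟩ := Finset.exists_subset_card_eq hsd
  have hWFi : W ⊆ Fi := fun x hx => (Finset.mem_sdiff.mp (hWsub hx)).1
  have hdisj : Disjoint V W := Finset.disjoint_left.mpr
    fun x hxV hxW => (Finset.mem_sdiff.mp (hWsub hxW)).2 hxV
  have hTmem : V ∪ W ∈ (S₀.powersetCard r).filter (fun T' => V ⊆ T' ∧ T' \ V ⊆ Fi) := by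
    refine Finset.mem_filter.mpr ⟨Finset.mem_powersetCard.mpr ⟨?_, ?_⟩, ?_, ?_⟩
    · exact Finset.union_subset hV (hWFi.trans hFiS)
    · rw [Finset.card_union_of_disjoint hdisj, hWcard]; omega
    · exact Finset.subset_union_left
    · intro x hx
      rcases Finset.mem_sdiff.mp hx with ⟨hx1, hx2⟩
      rcases Finset.mem_union.mp hx1 with h | h
      · exact absurd h hx2
      · exact hWFi h
  calc ∏ i ∈ V, a i ≤ ∏ i ∈ V ∪ W, a i := by
        rw [Finset.prod_union hdisj]
        exact Nat.le_mul_of_pos_right _ (Finset.prod_pos fun i hi => hapos i (hWFi hi))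
    _ ≤ _ := Finset.single_le_sum (f := fun T' => ∏ i ∈ T', a i)
        (fun _ _ => Nat.zero_le _) hTmem

/-- Core counting bound. -/
lemma core_bound {α : Type*} [DecidableEq α] (r : ℕ) (S₀ Fi Gi : Finset α)
    (a c : α → ℕ) (hFiS : Fi ⊆ S₀) (hFic : Fi.card = r) (hGic : Gi.card = r)
    (hapos : ∀ i ∈ Fi, 1 ≤ a i)
    (hcle : ∀ i, c i ≤ a i + (if i ∈ Gi then 1 else 0)) :
    ∑ T ∈ S₀.powersetCard r, ∏ i ∈ T, c i
      ≤ 4 ^ r * ∑ T ∈ S₀.powersetCard r, ∏ i ∈ T, a i := by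
  classical
  set P := S₀.powersetCard r with hP
  set χ : α → ℕ := fun i => if i ∈ Gi then 1 else 0 with hχ
  set D : Finset α → Finset α → Finset α → ℕ := fun T V T' =>
    if V ⊆ T ∧ V ⊆ T' ∧ T' \ V ⊆ Fi ∧ T \ V ⊆ Gi then ∏ i ∈ T', a i else 0 with hD
  have key : ∀ T ∈ P, ∏ i ∈ T, c i ≤ ∑ V ∈ S₀.powerset, ∑ T' ∈ P, D T V T' := by
    intro T hT
    rcases Finset.mem_powersetCard.mp hT with ⟨hTS, hTc⟩
    calc ∏ i ∈ T, c i ≤ ∏ i ∈ T, (a i + χ i) :=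
          Finset.prod_le_prod' fun i _ => hcle i
      _ = ∑ V ∈ T.powerset, (∏ i ∈ V, a i) * ∏ i ∈ T \ V, χ i := Finset.prod_add a χ T
      _ ≤ ∑ V ∈ T.powerset, ∑ T' ∈ P, D T V T' := by
          refine Finset.sum_le_sum fun V hV => ?_
          have hVT : V ⊆ T := Finset.mem_powerset.mp hV
          by_cases hTVG : T \ V ⊆ Gi
          · have hχ1 : ∏ i ∈ T \ V, χ i = 1 :=
              Finset.prod_eq_one fun i hi => if_pos (hTVG hi)
            rw [hχ1, mul_one]
            calc ∏ i ∈ V, a i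
                ≤ ∑ T' ∈ P.filter (fun T' => V ⊆ T' ∧ T' \ V ⊆ Fi), ∏ i ∈ T', a i :=
                  pad_le r S₀ Fi a hFiS hFic hapos V (hVT.trans hTS)
                    (hTc ▸ Finset.card_le_card hVT)
              _ = ∑ T' ∈ P, if V ⊆ T' ∧ T' \ V ⊆ Fi then ∏ i ∈ T', a i else 0 :=
                  Finset.sum_filter _ _
              _ ≤ ∑ T' ∈ P, D T V T' := by
                  refine Finset.sum_le_sum fun T' _ => ?_
                  have hD' : D T V T' = if V ⊆ T ∧ V ⊆ T' ∧ T' \ V ⊆ Fi ∧ T \ V ⊆ Gi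
                      then ∏ i ∈ T', a i else 0 := rfl
                  by_cases h : V ⊆ T' ∧ T' \ V ⊆ Fi
                  · rw [if_pos h, hD', if_pos ⟨hVT, h.1, h.2, hTVG⟩]
                  · rw [if_neg h]; exact Nat.zero_le _
          · obtain ⟨i0, hi0, hi0G⟩ := Finset.not_subset.mp hTVG
            have : ∏ i ∈ T \ V, χ i = 0 := Finset.prod_eq_zero hi0 (if_neg hi0G)
            rw [this, mul_zero]
            exact Nat.zero_le _
      _ ≤ ∑ V ∈ S₀.powerset, ∑ T' ∈ P, D T V T' :=
          Finset.sum_le_sum_of_subset (Finset.powerset_mono.mpr hTS)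
  calc ∑ T ∈ P, ∏ i ∈ T, c i ≤ ∑ T ∈ P, ∑ V ∈ S₀.powerset, ∑ T' ∈ P, D T V T' :=
        Finset.sum_le_sum key
    _ = ∑ T ∈ P, ∑ T' ∈ P, ∑ V ∈ S₀.powerset, D T V T' :=
        Finset.sum_congr rfl fun T _ => Finset.sum_comm
    _ = ∑ T' ∈ P, ∑ T ∈ P, ∑ V ∈ S₀.powerset, D T V T' := Finset.sum_comm
    _ ≤ ∑ T' ∈ P, 4 ^ r * ∏ i ∈ T', a i := by
        refine Finset.sum_le_sum fun T' hT' => ?_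
        rw [← Finset.sum_product' (f := fun T V => D T V T')]
        simp only [hD]
        rw [Finset.sum_ite, Finset.sum_const, Finset.sum_const_zero, add_zero, smul_eq_mul]
        have hcount : ((P ×ˢ S₀.powerset).filter
            (fun p => p.2 ⊆ p.1 ∧ p.2 ⊆ T' ∧ T' \ p.2 ⊆ Fi ∧ p.1 \ p.2 ⊆ Gi)).card
            ≤ 4 ^ r := by
          have hinj : Set.InjOn (fun p : Finset α × Finset α => (T' \ p.2, p.1 \ p.2))
              ((P ×ˢ S₀.powerset).filter
              (fun p => p.2 ⊆ p.1 ∧ p.2 ⊆ T' ∧ T' \ p.2 ⊆ Fi ∧ p.1 \ p.2 ⊆ Gi) : Set _) := by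
            intro p hp q hq heq
            simp only [Finset.coe_filter, Set.mem_setOf_eq] at hp hq
            obtain ⟨-, hp1, hp2, -, -⟩ := hp
            obtain ⟨-, hq1, hq2, -, -⟩ := hq
            have h1 : T' \ p.2 = T' \ q.2 := congrArg Prod.fst heq
            have h2 : p.1 \ p.2 = q.1 \ q.2 := congrArg Prod.snd heq
            have hV : p.2 = q.2 := by
              have := congrArg (fun s => T' \ s) h1
              simpa [Finset.sdiff_sdiff_eq_self hp2, Finset.sdiff_sdiff_eq_self hq2] using this
            have hT : p.1 = q.1 := by
              have e1 : p.2 ∪ (p.1 \ p.2) = p.1 := Finset.union_sdiff_of_subset hp1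
              have e2 : q.2 ∪ (q.1 \ q.2) = q.1 := Finset.union_sdiff_of_subset hq1
              rw [← e1, ← e2, h2, hV]
            exact Prod.ext hT hV
          have hmaps : ∀ p ∈ (P ×ˢ S₀.powerset).filter
              (fun p => p.2 ⊆ p.1 ∧ p.2 ⊆ T' ∧ T' \ p.2 ⊆ Fi ∧ p.1 \ p.2 ⊆ Gi),
              (T' \ p.2, p.1 \ p.2) ∈ Fi.powerset ×ˢ Gi.powerset := by
            intro p hp
            rcases Finset.mem_filter.mp hp with ⟨-, -, -, h3, h4⟩
            exact Finset.mem_product.mpr ⟨Finset.mem_powerset.mpr h3, Finset.mem_powerset.mpr h4⟩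
          calc _ ≤ (Fi.powerset ×ˢ Gi.powerset).card :=
                Finset.card_le_card_of_injOn _ hmaps hinj
            _ = 4 ^ r := by
                rw [Finset.card_product, Finset.card_powerset, Finset.card_powerset,
                  hFic, hGic, ← mul_pow]
                norm_num
        exact Nat.mul_le_mul_right _ hcount
    _ = 4 ^ r * ∑ T ∈ P, ∏ i ∈ T, a i := (Finset.mul_sum _ _ _).symm

/-- Let `M` be a maximal `2r`-matching of `[n]` and `s = 200·4^r`.
If `f` is `s`-good and `g` complements `f` (i.e. `(f,g) ∈ P`), then `g` is `s²`-good. -/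
theorem complement_is_good (r n m : ℕ) (hr : 0 < r) (M : Finset (Finset (Fin n)))
    (hcard : ∀ S ∈ M, S.card = 2 * r)
    (hdisj : (M : Set (Finset (Fin n))).Pairwise fun S T => Disjoint S T)
    (hmax : ∀ S' : Finset (Fin n), S'.card = 2 * r → (∀ S ∈ M, Disjoint S' S) → S' ∈ M)
    (f g : Fin m → Fin n) (hf : IsGood r n m M (200 * 4 ^ r) f)
    (hg : Complements r n m M f g) :
    IsGood r n m M ((200 * 4 ^ r) ^ 2) g := by
  classical
  obtain ⟨I, ⟨hIcard, hS0M, hout⟩, -⟩ := hg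
  set Fi := I.image f with hFidef
  set Gi := I.image g with hGidef
  set S₀ := Fi ∪ Gi with hS0def
  have hS0card : S₀.card = 2 * r := hcard _ hS0M
  have hFile : Fi.card ≤ r := hIcard ▸ Finset.card_image_le
  have hGile : Gi.card ≤ r := hIcard ▸ Finset.card_image_le
  have hui : S₀.card + (Fi ∩ Gi).card = Fi.card + Gi.card := by
    rw [hS0def]; exact Finset.card_union_add_card_inter Fi Gi
  have hFicard : Fi.card = r := by omega
  have hGicard : Gi.card = r := by omega
  have hFiS : Fi ⊆ S₀ := hS0def ▸ Finset.subset_union_left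
  have hGiS : Gi ⊆ S₀ := hS0def ▸ Finset.subset_union_right
  have hapos : ∀ i ∈ Fi, 1 ≤ (Finset.univ.filter fun j => f j = i).card := by
    intro i hi
    obtain ⟨j, hj, rfl⟩ := Finset.mem_image.mp hi
    exact Finset.card_pos.mpr ⟨j, Finset.mem_filter.mpr ⟨Finset.mem_univ j, rfl⟩⟩
  have hcpos : ∀ i ∈ Gi, 1 ≤ (Finset.univ.filter fun j => g j = i).card := by
    intro i hi
    obtain ⟨j, hj, rfl⟩ := Finset.mem_image.mp hi
    exact Finset.card_pos.mpr ⟨j, Finset.mem_filter.mpr ⟨Finset.mem_univ j, rfl⟩⟩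
  have hginj : Set.InjOn g I := Finset.card_image_iff.mp (by
    rw [← hGidef, hGicard, hIcard])
  have hcle0 : ∀ i, i ∉ Gi →
      (Finset.univ.filter fun j => g j = i).card ≤ (Finset.univ.filter fun j => f j = i).card := by
    intro i hiG
    apply Finset.card_le_card
    intro j hj
    have hji : g j = i := (Finset.mem_filter.mp hj).2
    have hjI : j ∉ I := fun h => hiG (by rw [hGidef]; exact hji ▸ Finset.mem_image_of_mem g h)
    exact Finset.mem_filter.mpr ⟨Finset.mem_univ _, (hout j hjI).symm.trans hji⟩
  have hcle : ∀ i, (Finset.univ.filter fun j => g j = i).card ≤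
      (Finset.univ.filter fun j => f j = i).card + (if i ∈ Gi then 1 else 0) := by
    intro i
    by_cases hiG : i ∈ Gi
    · rw [if_pos hiG]
      have hsub : (Finset.univ.filter fun j => g j = i) ⊆
          (Finset.univ.filter fun j => f j = i) ∪ (I.filter fun j => g j = i) := by
        intro j hj
        have hji : g j = i := (Finset.mem_filter.mp hj).2
        by_cases hjI : j ∈ I
        · exact Finset.mem_union_right _ (Finset.mem_filter.mpr ⟨hjI, hji⟩)
        · exact Finset.mem_union_left _
            (Finset.mem_filter.mpr ⟨Finset.mem_univ _, (hout j hjI).symm.trans hji⟩)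
      have hcard1 : (I.filter fun j => g j = i).card ≤ 1 := Finset.card_le_one.mpr (by
        intro x hx y hy
        exact hginj (Finset.mem_filter.mp hx).1 (Finset.mem_filter.mp hy).1
          (((Finset.mem_filter.mp hx).2).trans ((Finset.mem_filter.mp hy).2).symm))
      calc (Finset.univ.filter fun j => g j = i).card
          ≤ ((Finset.univ.filter fun j => f j = i) ∪ (I.filter fun j => g j = i)).card :=
            Finset.card_le_card hsub
        _ ≤ (Finset.univ.filter fun j => f j = i).card + (I.filter fun j => g j = i).card :=
            Finset.card_union_le _ _
        _ ≤ (Finset.univ.filter fun j => f j = i).card + 1 := Nat.add_le_add_left hcard1 _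
    · rw [if_neg hiG, Nat.add_zero]
      exact hcle0 i hiG
  have hGimem : Gi ∈ S₀.powersetCard r := Finset.mem_powersetCard.mpr ⟨hGiS, hGicard⟩
  have hlow : 1 ≤ phiM r n m M g := by
    calc 1 ≤ ∏ i ∈ Gi, (Finset.univ.filter fun j => g j = i).card :=
          Finset.one_le_prod' hcpos
      _ ≤ muS r n m S₀ g := by
          unfold muS
          exact Finset.single_le_sum
            (f := fun T => ∏ i ∈ T, (Finset.univ.filter fun j => g j = i).card)
            (fun _ _ => Nat.zero_le _) hGimem
      _ ≤ phiM r n m M g := by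
          unfold phiM
          exact Finset.single_le_sum (f := fun S => muS r n m S g)
            (fun _ _ => Nat.zero_le _) hS0M
  have hmuf : muS r n m S₀ f ≤ 200 * 4 ^ r := by
    refine le_trans ?_ hf.2
    unfold phiM
    exact Finset.single_le_sum (f := fun S => muS r n m S f)
      (fun _ _ => Nat.zero_le _) hS0M
  have hmu0 : muS r n m S₀ g ≤ 4 ^ r * (200 * 4 ^ r) := by
    have hcb := core_bound r S₀ Fi Gi (fun i => (Finset.univ.filter fun j => f j = i).card)
      (fun i => (Finset.univ.filter fun j => g j = i).card) hFiS hFicard hGicard hapos hcle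
    calc muS r n m S₀ g ≤ 4 ^ r * muS r n m S₀ f := hcb
      _ ≤ 4 ^ r * (200 * 4 ^ r) := Nat.mul_le_mul_left _ hmuf
  have hrest : ∑ S ∈ M.erase S₀, muS r n m S g ≤ 200 * 4 ^ r := by
    calc ∑ S ∈ M.erase S₀, muS r n m S g ≤ ∑ S ∈ M.erase S₀, muS r n m S f := by
          refine Finset.sum_le_sum fun S hS => ?_
          have hSne : S ≠ S₀ := Finset.ne_of_mem_erase hS
          have hSM : S ∈ M := Finset.mem_of_mem_erase hS
          have hSd : Disjoint S S₀ := hdisj (by exact_mod_cast hSM) (by exact_mod_cast hS0M) hSne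
          unfold muS
          refine Finset.sum_le_sum fun T hT => Finset.prod_le_prod' fun i hi => ?_
          have hiS : i ∈ S := (Finset.mem_powersetCard.mp hT).1 hi
          have hiG : i ∉ Gi := fun h => (Finset.disjoint_left.mp hSd hiS) (hGiS h)
          exact hcle0 i hiG
      _ ≤ phiM r n m M f := by
          unfold phiM
          exact Finset.sum_le_sum_of_subset (Finset.erase_subset _ _)
      _ ≤ 200 * 4 ^ r := hf.2
  have hsplit : phiM r n m M g = muS r n m S₀ g + ∑ S ∈ M.erase S₀, muS r n m S g := by
    unfold phiM
    exact (Finset.add_sum_erase M _ hS0M).symm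
  refine ⟨hlow, ?_⟩
  rw [hsplit]
  have hx : 1 ≤ 4 ^ r := Nat.one_le_pow _ _ (by norm_num)
  have : 4 ^ r * (200 * 4 ^ r) + 200 * 4 ^ r ≤ (200 * 4 ^ r) ^ 2 := by nlinarith [hx]
  omega
end

section
/- Let H = ([n], E) be a d-uniform hypergraph and, for each edge e ∈ E with elements e_1 < e_2 < … < e_d, include the monomial x^{(1)}_{e_1} x^{(2)}_{e_2} ⋯ x^{(d)}_{e_d} in the d-linear form Λ_H(x^{(1)}, …, x^{(d)}) = Σ_{e ∈ E} Π_{j=1}^d x^{(j)}_{e_j}, so that Λ_H(x, …, x) = p_H(x). Let r_1, …, r_d ≥ 1 satisfy Σ_{j=1}^d 1/r_j = 1. Then the norm ‖Λ_H‖ = sup{ |Λ_H(x^{(1)},…,x^{(d)})| / (‖x^{(1)}‖_{ℓ_{r_1}} ⋯ ‖x^{(d)}‖_{ℓ_{r_d}}) : x^{(j)} ∈ ℝ^n \ {0} } satisfies ‖Λ_H‖ ≤ d · Δ(H). -/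
/-- Let `H = ([n], E)` be a `d`-uniform hypergraph, with edges given
as strictly increasing `d`-tuples `a m : Fin d → Fin n` (so the `m`-th edge is
`{a m 0 < a m 1 < ⋯}`), and let `Λ_H(x^{(1)},…,x^{(d)}) = ∑_m ∏_j x^{(j)}_{a m j}`,
so that `Λ_H(x,…,x) = p_H(x)`.  Let `r_1, …, r_d ≥ 1` satisfy `∑ 1/r_j = 1`.  Then
`‖Λ_H‖ ≤ d·Δ(H)`, stated pointwise:
`|Λ_H(x^{(1)},…,x^{(d)})| ≤ d·Δ(H)·∏_j ‖x^{(j)}‖_{ℓ_{r_j}}` for all `x^{(j)} ∈ ℝ^n`. -/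
theorem multilinear_form_norm_bound (n d M : ℕ) (hd : 0 < d)
    (a : Fin M → Fin d → Fin n) (ha : ∀ m, StrictMono (a m))
    (r : Fin d → ℝ) (hr : ∀ j, 1 ≤ r j) (hsum : (∑ j, 1 / r j) = 1)
    (x : Fin d → Fin n → ℝ) :
    |∑ m : Fin M, ∏ j : Fin d, x j (a m j)| ≤
      ((d * (Finset.univ.sup fun w : Fin n =>
          (Finset.univ.filter fun m : Fin M => ∃ j, a m j = w).card) : ℕ) : ℝ) *
        ∏ j : Fin d, (∑ i : Fin n, |x j i| ^ (r j)) ^ (1 / r j) := by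
  classical
  set Δ : ℕ := Finset.univ.sup fun w : Fin n =>
      (Finset.univ.filter fun m : Fin M => ∃ j, a m j = w).card with hΔ
  have hr0 : ∀ j, (0:ℝ) < r j := fun j => lt_of_lt_of_le one_pos (hr j)
  set S : Fin d → ℝ := fun j => ∑ i, |x j i| ^ (r j) with hSdef
  have hSnn : ∀ j, 0 ≤ S j :=
    fun j => Finset.sum_nonneg fun i _ => Real.rpow_nonneg (abs_nonneg _) _
  have hPnn : 0 ≤ ∏ j : Fin d, (S j) ^ (1 / r j) :=
    Finset.prod_nonneg fun j _ => Real.rpow_nonneg (hSnn j) _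
  by_cases hz : ∃ j, S j = 0
  · obtain ⟨j0, hj0⟩ := hz
    have hx0 : ∀ i, x j0 i = 0 := by
      intro i
      have h1 := (Finset.sum_eq_zero_iff_of_nonneg
        (fun i _ => Real.rpow_nonneg (abs_nonneg (x j0 i)) (r j0))).1 hj0 i (Finset.mem_univ i)
      have h2 : |x j0 i| = 0 :=
        (Real.rpow_eq_zero (abs_nonneg _) (ne_of_gt (hr0 j0))).1 h1
      exact abs_eq_zero.1 h2
    have hL : (∑ m : Fin M, ∏ j, x j (a m j)) = 0 :=
      Finset.sum_eq_zero fun m _ => Finset.prod_eq_zero (Finset.mem_univ j0) (hx0 _)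
    rw [hL, abs_zero]
    exact mul_nonneg (Nat.cast_nonneg _) hPnn
  · push_neg at hz
    have hSpos : ∀ j, 0 < S j := fun j => lt_of_le_of_ne (hSnn j) (Ne.symm (hz j))
    set P : ℝ := ∏ j : Fin d, (S j) ^ (1 / r j) with hPdef
    have hPpos : 0 < P := Finset.prod_pos fun j _ => Real.rpow_pos_of_pos (hSpos j) _
    -- Step 1: per-edge AM-GM bound
    have step1 : ∀ m : Fin M, ∏ j, |x j (a m j)| ≤
        P * ∑ j, (1 / r j) * (|x j (a m j)| ^ (r j) / S j) := by
      intro m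
      have amgm := Real.geom_mean_le_arith_mean_weighted Finset.univ (fun j => 1 / r j)
        (fun j => |x j (a m j)| ^ (r j) / S j)
        (fun j _ => one_div_nonneg.2 (hr0 j).le) hsum
        (fun j _ => div_nonneg (Real.rpow_nonneg (abs_nonneg _) _) (hSnn j))
      have hprod : (∏ j, (|x j (a m j)| ^ (r j) / S j) ^ (1 / r j))
          = (∏ j, |x j (a m j)|) / P := by
        rw [hPdef, ← Finset.prod_div_distrib]
        refine Finset.prod_congr rfl fun j _ => ?_
        rw [Real.div_rpow (Real.rpow_nonneg (abs_nonneg _) _) (hSnn j)]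
        congr 1
        rw [← Real.rpow_mul (abs_nonneg _), mul_one_div, div_self (ne_of_gt (hr0 j)),
          Real.rpow_one]
      rw [hprod] at amgm
      calc ∏ j, |x j (a m j)| = P * ((∏ j, |x j (a m j)|) / P) := by
            field_simp
        _ ≤ P * ∑ j, (1 / r j) * (|x j (a m j)| ^ (r j) / S j) :=
            mul_le_mul_of_nonneg_left amgm (le_of_lt hPpos)
    -- Step 2: fiber counting
    have step2 : ∀ j : Fin d, ∑ m : Fin M, |x j (a m j)| ^ (r j) ≤ (Δ:ℝ) * S j := by
      intro j
      have hfib := Finset.sum_fiberwise_of_maps_to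
        (s := (Finset.univ : Finset (Fin M))) (g := fun m : Fin M => a m j) (t := Finset.univ)
        (fun m _ => Finset.mem_univ (a m j)) (fun m => |x j (a m j)| ^ (r j))
      rw [← hfib]
      have : ∀ w : Fin n,
          (∑ m ∈ Finset.univ.filter (fun m => a m j = w), |x j (a m j)| ^ (r j))
            ≤ (Δ:ℝ) * (|x j w| ^ (r j)) := by
        intro w
        have hcongr : (∑ m ∈ Finset.univ.filter (fun m => a m j = w),
            |x j (a m j)| ^ (r j))
            = (Finset.univ.filter (fun m : Fin M => a m j = w)).card * (|x j w| ^ (r j)) := by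
          rw [Finset.sum_congr rfl (fun m hm => by
            rw [(Finset.mem_filter.1 hm).2]), Finset.sum_const, nsmul_eq_mul]
        rw [hcongr]
        have hcard : (Finset.univ.filter (fun m : Fin M => a m j = w)).card ≤ Δ := by
          refine le_trans (Finset.card_le_card ?_)
            (Finset.le_sup (f := fun w : Fin n =>
              (Finset.univ.filter fun m : Fin M => ∃ j, a m j = w).card) (Finset.mem_univ w))
          intro m hm
          simp only [Finset.mem_filter, Finset.mem_univ, true_and] at hm ⊢
          exact ⟨j, hm⟩
        exact mul_le_mul_of_nonneg_right (by exact_mod_cast hcard)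
          (Real.rpow_nonneg (abs_nonneg _) _)
      calc (∑ w : Fin n, ∑ m ∈ Finset.univ.filter (fun m => a m j = w),
              |x j (a m j)| ^ (r j))
          ≤ ∑ w : Fin n, (Δ:ℝ) * (|x j w| ^ (r j)) :=
            Finset.sum_le_sum fun w _ => this w
        _ = (Δ:ℝ) * S j := by rw [← Finset.mul_sum]
    -- Combine
    have main : |∑ m : Fin M, ∏ j, x j (a m j)| ≤ (Δ:ℝ) * P := by
      calc |∑ m : Fin M, ∏ j, x j (a m j)|
          ≤ ∑ m : Fin M, |∏ j, x j (a m j)| := Finset.abs_sum_le_sum_abs _ _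
        _ = ∑ m : Fin M, ∏ j, |x j (a m j)| := by
            refine Finset.sum_congr rfl fun m _ => ?_
            rw [Finset.abs_prod]
        _ ≤ ∑ m : Fin M, (P * ∑ j, (1 / r j) * (|x j (a m j)| ^ (r j) / S j)) :=
            Finset.sum_le_sum fun m _ => step1 m
        _ = P * ∑ j, (1 / r j) * ((∑ m : Fin M, |x j (a m j)| ^ (r j)) / S j) := by
            rw [← Finset.mul_sum, Finset.sum_comm]
            congr 1
            refine Finset.sum_congr rfl fun j _ => ?_
            rw [← Finset.mul_sum, Finset.sum_div]
        _ ≤ P * ∑ j, (1 / r j) * (Δ:ℝ) := by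
            refine mul_le_mul_of_nonneg_left (Finset.sum_le_sum fun j _ => ?_) (le_of_lt hPpos)
            refine mul_le_mul_of_nonneg_left ?_ (one_div_nonneg.2 (hr0 j).le)
            rw [div_le_iff₀ (hSpos j)]
            exact step2 j
        _ = (Δ:ℝ) * P := by
            rw [← Finset.sum_mul, hsum, one_mul, mul_comm]
    refine le_trans main ?_
    have hΔle : (Δ:ℝ) ≤ ((d * Δ : ℕ) : ℝ) := by
      exact_mod_cast Nat.le_mul_of_pos_left Δ hd
    exact mul_le_mul_of_nonneg_right hΔle (le_of_lt hPpos)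
end

section
/- There exists an absolute constant C > 0 such that the following holds for all n ≥ 2, k, t. Let A_1, …, A_k ∈ {0,1}^{n×n} be matrices each of whose rows and columns contains at most t ones, and let ψ : ℝ^n → ℝ^k be the quadratic map with coordinates ψ_i(x) = ⟨A_i x, x⟩. Then gw(ψ({0,1}^n)) ≤ C · t n · √(k log n). -/
/-!
Write `M(g) = ∑ᵢ gᵢ (Aᵢ + Aᵢᵀ)`, a symmetric matrix whose entries are linear in the Gaussian
vector `g`. For `x ∈ {0,1}ⁿ` we have `∑ᵢ ψᵢ(x) gᵢ = ⟨M(g) x, x⟩ / 2`, and iterating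
Cauchy–Schwarz gives `⟨M x, x⟩ ^ N ≤ ‖x‖^{2N} tr (M ^ N)` for `N` a power of two, so the `N`-th
power of the supremum is at most `(n/2)^N tr (M(g)^N)`. Expanding `tr (M(g)^N)` into monomials,
every Gaussian monomial has nonnegative expectation and every word `S_{f 1} ⋯ S_{f N}` has trace at
most `n (2t)^N` (the `ℓ∞` operator norm of each `Aᵢ`, `Aᵢᵀ` is at most `t`), so
`E tr (M(g)^N) ≤ n (2t)^N E (∑ᵢ gᵢ)^N ≤ n (2t)^N · 2 (e N k)^{N/2}`. Jensen's inequality for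
`y ↦ y^{1/N}` and the choice `N ≈ log n`, which makes `n^{1/N}` bounded, finish the proof.
-/

open MeasureTheory ProbabilityTheory Finset Matrix Real

attribute [local instance] Matrix.linftyOpNormedAddCommGroup

noncomputable abbrev stdGaussianPi (ι : Type*) [Fintype ι] : Measure (ι → ℝ) :=
  Measure.pi fun _ : ι => gaussianReal 0 1

section Gaussian

lemma integrable_pow_gaussianReal (μ : ℝ) (v : NNReal) (m : ℕ) :
    Integrable (fun x : ℝ => x ^ m) (gaussianReal μ v) := by
  refine (memLp_id_gaussianReal (μ := μ) (v := v) m).integrable_norm_pow'.mono' (by fun_prop) ?_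
  exact ae_of_all _ fun x => by simp

lemma integral_pow_gaussianReal_nonneg (v : NNReal) (m : ℕ) :
    0 ≤ ∫ x, x ^ m ∂gaussianReal 0 v := by
  rcases Nat.even_or_odd m with hm | hm
  · exact integral_nonneg fun x => hm.pow_nonneg x
  · have hsymm : ∫ x, x ^ m ∂gaussianReal 0 v = -∫ x, x ^ m ∂gaussianReal 0 v := by
      conv_lhs => rw [← neg_zero, ← gaussianReal_map_neg, integral_map (by fun_prop) (by fun_prop)]
      simp [hm.neg_pow, integral_neg]
    linarith

lemma pow_le_factorial_mul_exp_add_exp (y : ℝ) (N : ℕ) :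
    y ^ N ≤ N.factorial * (exp y + exp (-y)) := by
  have habs : |y| ^ N ≤ N.factorial * exp |y| := by
    have := pow_div_factorial_le_exp _ (abs_nonneg y) N
    rw [div_le_iff₀ (by positivity)] at this
    linarith
  have hexp : exp |y| ≤ exp y + exp (-y) := by
    rcases abs_choice y with h | h <;> rw [h] <;> linarith [exp_pos y, exp_pos (-y)]
  calc y ^ N ≤ |y| ^ N := (le_abs_self _).trans (abs_pow y N).le
    _ ≤ N.factorial * exp |y| := habs
    _ ≤ N.factorial * (exp y + exp (-y)) := by gcongr

variable {ι : Type*} [Fintype ι]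

lemma prod_comp_eq_prod_pow_card {M : Type*} [CommMonoid M] [DecidableEq ι] {N : ℕ}
    (f : Fin N → ι) (g : ι → M) :
    ∏ j, g (f j) = ∏ i, g i ^ #{j | f j = i} := by
  rw [← prod_fiberwise_of_maps_to (fun j _ => mem_univ (f j))]
  refine prod_congr rfl fun i _ => ?_
  rw [prod_congr rfl fun j hj => by rw [(mem_filter.mp hj).2], prod_const]

lemma integrable_monomial_stdGaussianPi {N : ℕ} (f : Fin N → ι) :
    Integrable (fun g : ι → ℝ => ∏ j, g (f j)) (stdGaussianPi ι) := by
  classical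
  simp_rw [prod_comp_eq_prod_pow_card f]
  exact Integrable.fintype_prod fun i => integrable_pow_gaussianReal 0 1 _

lemma integral_monomial_stdGaussianPi_nonneg {N : ℕ} (f : Fin N → ι) :
    0 ≤ ∫ g, ∏ j, g (f j) ∂stdGaussianPi ι := by
  classical
  simp_rw [prod_comp_eq_prod_pow_card f]
  rw [stdGaussianPi, integral_fintype_prod_eq_prod fun i (x : ℝ) => x ^ #{j | f j = i}]
  exact prod_nonneg fun i _ => integral_pow_gaussianReal_nonneg 1 _

lemma integrable_exp_mul_sum_stdGaussianPi (c : ℝ) :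
    Integrable (fun g : ι → ℝ => exp (c * ∑ i, g i)) (stdGaussianPi ι) := by
  simp_rw [mul_sum, exp_sum]
  exact Integrable.fintype_prod fun _ => integrable_exp_mul_gaussianReal c

lemma integral_exp_mul_sum_stdGaussianPi (c : ℝ) :
    ∫ g, exp (c * ∑ i, g i) ∂stdGaussianPi ι = exp (Fintype.card ι * c ^ 2 / 2) := by
  simp_rw [mul_sum, exp_sum]
  rw [stdGaussianPi, integral_fintype_prod_eq_pow fun x => exp (c * x)]
  have hmgf := congrFun (mgf_fun_id_gaussianReal (μ := 0) (v := 1)) c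
  rw [mgf] at hmgf
  rw [hmgf, ← exp_nat_mul]
  push_cast
  ring_nf

lemma integral_sum_pow_stdGaussianPi_le {h : ℕ} (hh : 0 < h) :
    ∫ g, (∑ i, g i) ^ (2 * h) ∂stdGaussianPi ι ≤
      2 * (exp 1 * (2 * h) * Fintype.card ι) ^ h := by
  rcases isEmpty_or_nonempty ι with hι | hι
  · simp [zero_pow (by omega : 2 * h ≠ 0)]
  set k : ℝ := (Fintype.card ι : ℝ)
  set H : ℝ := 2 * h
  have hk : 0 < k := by simp [k, Fintype.card_pos]
  have hH : 0 < H := by positivity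
  -- exponential moment at `l` with `k l ^ 2 = 2 h`
  set l := √(H / k)
  have hl : 0 < l := sqrt_pos.mpr (by positivity)
  have hl2 : l ^ 2 = H / k := sq_sqrt (by positivity)
  have hpt : ∀ g : ι → ℝ, (∑ i, g i) ^ (2 * h) ≤ (2 * h).factorial / l ^ (2 * h) *
      (exp (l * ∑ i, g i) + exp (-l * ∑ i, g i)) := fun g => by
    rw [div_mul_eq_mul_div, le_div_iff₀ (by positivity), mul_comm, ← mul_pow, neg_mul]
    exact pow_le_factorial_mul_exp_add_exp _ _
  have hint : Integrable (fun g : ι → ℝ => (2 * h).factorial / l ^ (2 * h) *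
      (exp (l * ∑ i, g i) + exp (-l * ∑ i, g i))) (stdGaussianPi ι) :=
    ((integrable_exp_mul_sum_stdGaussianPi l).add
      (integrable_exp_mul_sum_stdGaussianPi (-l))).const_mul _
  have hexp : exp (k * l ^ 2 / 2) = exp 1 ^ h := by
    rw [hl2, ← exp_nat_mul]
    congr 1
    field_simp
    rfl
  calc ∫ g, (∑ i, g i) ^ (2 * h) ∂stdGaussianPi ι
      ≤ ∫ g, (2 * h).factorial / l ^ (2 * h) *
          (exp (l * ∑ i, g i) + exp (-l * ∑ i, g i)) ∂stdGaussianPi ι :=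
        integral_mono_of_nonneg (ae_of_all _ fun g => (even_two_mul h).pow_nonneg _) hint
          (ae_of_all _ hpt)
    _ = (2 * h).factorial * (k / H) ^ h * (2 * exp 1 ^ h) := by
        rw [integral_const_mul, integral_add (integrable_exp_mul_sum_stdGaussianPi l)
          (integrable_exp_mul_sum_stdGaussianPi (-l)), integral_exp_mul_sum_stdGaussianPi,
          integral_exp_mul_sum_stdGaussianPi, neg_sq, hexp, pow_mul, hl2, div_pow, div_pow]
        field_simp
        ring
    _ ≤ (H ^ h * H ^ h) * (k / H) ^ h * (2 * exp 1 ^ h) := by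
        gcongr
        rw [← pow_add, ← two_mul]
        simpa [H] using (Nat.cast_le (α := ℝ)).mpr (Nat.factorial_le_pow (2 * h))
    _ = 2 * (exp 1 * H * k) ^ h := by
        rw [div_pow]
        field_simp
        ring

end Gaussian

section QuadraticForm

variable {m : Type*} [Fintype m]

lemma sq_dotProduct_mulVec_le (M : Matrix m m ℝ) (x : m → ℝ) :
    (x ⬝ᵥ M *ᵥ x) ^ 2 ≤ (x ⬝ᵥ x) * (M *ᵥ x ⬝ᵥ M *ᵥ x) := by
  simpa [dotProduct, sq] using sum_mul_sq_le_sq_mul_sq univ x (M *ᵥ x)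

lemma Matrix.IsSymm.mulVec_dotProduct_mulVec_self [DecidableEq m] {M : Matrix m m ℝ}
    (hM : M.IsSymm) (x : m → ℝ) : M *ᵥ x ⬝ᵥ M *ᵥ x = x ⬝ᵥ (M ^ 2) *ᵥ x := by
  rw [sq, ← mulVec_mulVec, dotProduct_mulVec, ← mulVec_transpose, hM.eq, dotProduct_comm]

lemma Matrix.IsSymm.dotProduct_mulVec_pow_two_pow_le [DecidableEq m] {M : Matrix m m ℝ}
    (hM : M.IsSymm) (x : m → ℝ) (q : ℕ) :
    (x ⬝ᵥ M *ᵥ x) ^ 2 ^ q ≤ (x ⬝ᵥ x) ^ (2 ^ q - 1) * (x ⬝ᵥ (M ^ 2 ^ q) *ᵥ x) := by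
  induction q generalizing M with
  | zero => simp
  | succ q ih =>
    have hxx : 0 ≤ x ⬝ᵥ x := sum_nonneg fun i _ => mul_self_nonneg (x i)
    have hcs : (x ⬝ᵥ M *ᵥ x) ^ 2 ≤ (x ⬝ᵥ x) * (x ⬝ᵥ (M ^ 2) *ᵥ x) :=
      hM.mulVec_dotProduct_mulVec_self x ▸ sq_dotProduct_mulVec_le M x
    calc (x ⬝ᵥ M *ᵥ x) ^ 2 ^ (q + 1) = ((x ⬝ᵥ M *ᵥ x) ^ 2) ^ 2 ^ q := by
          rw [← pow_mul, pow_succ']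
      _ ≤ ((x ⬝ᵥ x) * (x ⬝ᵥ (M ^ 2) *ᵥ x)) ^ 2 ^ q := by gcongr
      _ = (x ⬝ᵥ x) ^ 2 ^ q * (x ⬝ᵥ (M ^ 2) *ᵥ x) ^ 2 ^ q := mul_pow _ _ _
      _ ≤ (x ⬝ᵥ x) ^ 2 ^ q * ((x ⬝ᵥ x) ^ (2 ^ q - 1) * (x ⬝ᵥ ((M ^ 2) ^ 2 ^ q) *ᵥ x)) := by
          gcongr
          exact ih (hM.pow 2)
      _ = (x ⬝ᵥ x) ^ (2 ^ (q + 1) - 1) * (x ⬝ᵥ (M ^ 2 ^ (q + 1)) *ᵥ x) := by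
          rw [← mul_assoc, ← pow_add, ← pow_mul, ← pow_succ']
          congr 3
          have := Nat.one_le_two_pow (n := q)
          rw [pow_succ]
          omega

lemma trace_transpose_mul_self_nonneg (B : Matrix m m ℝ) : 0 ≤ trace (Bᵀ * B) := by
  simpa [trace, mul_apply] using
    sum_nonneg fun c (_ : c ∈ univ) => sum_nonneg fun r (_ : r ∈ univ) => mul_self_nonneg (B r c)

lemma dotProduct_transpose_mul_self_mulVec_le (B : Matrix m m ℝ) (x : m → ℝ) :
    x ⬝ᵥ (Bᵀ * B) *ᵥ x ≤ (x ⬝ᵥ x) * trace (Bᵀ * B) := by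
  have hrow : ∀ r, (B *ᵥ x) r ^ 2 ≤ (∑ c, B r c ^ 2) * (x ⬝ᵥ x) := fun r => by
    simpa [mulVec, dotProduct, sq] using sum_mul_sq_le_sq_mul_sq univ (B r) x
  calc x ⬝ᵥ (Bᵀ * B) *ᵥ x = ∑ r, (B *ᵥ x) r ^ 2 := by
        rw [← mulVec_mulVec, dotProduct_mulVec, vecMul_transpose]
        simp [dotProduct, sq]
    _ ≤ ∑ r, (∑ c, B r c ^ 2) * (x ⬝ᵥ x) := sum_le_sum fun r _ => hrow r
    _ = (x ⬝ᵥ x) * trace (Bᵀ * B) := by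
        rw [← sum_mul, mul_comm, sum_comm]
        simp [trace, mul_apply, sq]

lemma Matrix.IsSymm.dotProduct_mulVec_pow_le_trace [DecidableEq m] {M : Matrix m m ℝ}
    (hM : M.IsSymm) {x : m → ℝ} {s : ℝ} (hx : x ⬝ᵥ x ≤ s) (q : ℕ) :
    (x ⬝ᵥ M *ᵥ x) ^ 2 ^ (q + 1) ≤ s ^ 2 ^ (q + 1) * trace (M ^ 2 ^ (q + 1)) := by
  have hxx : 0 ≤ x ⬝ᵥ x := sum_nonneg fun i _ => mul_self_nonneg (x i)
  have hsplit : M ^ 2 ^ (q + 1) = (M ^ 2 ^ q)ᵀ * M ^ 2 ^ q := by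
    rw [transpose_pow, hM.eq, ← pow_add, pow_succ, mul_two]
  calc (x ⬝ᵥ M *ᵥ x) ^ 2 ^ (q + 1)
      ≤ (x ⬝ᵥ x) ^ (2 ^ (q + 1) - 1) * (x ⬝ᵥ (M ^ 2 ^ (q + 1)) *ᵥ x) :=
        hM.dotProduct_mulVec_pow_two_pow_le x (q + 1)
    _ ≤ (x ⬝ᵥ x) ^ (2 ^ (q + 1) - 1) * ((x ⬝ᵥ x) * trace (M ^ 2 ^ (q + 1))) := by
        gcongr
        rw [hsplit]
        exact dotProduct_transpose_mul_self_mulVec_le _ x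
    _ = (x ⬝ᵥ x) ^ 2 ^ (q + 1) * trace (M ^ 2 ^ (q + 1)) := by
        rw [← mul_assoc, ← pow_succ, Nat.sub_add_cancel Nat.one_le_two_pow]
    _ ≤ s ^ 2 ^ (q + 1) * trace (M ^ 2 ^ (q + 1)) := by
        gcongr
        rw [hsplit]
        exact trace_transpose_mul_self_nonneg _

lemma dotProduct_add_transpose_mulVec (A : Matrix m m ℝ) (v : m → ℝ) :
    v ⬝ᵥ (A + Aᵀ) *ᵥ v = 2 * (v ⬝ᵥ A *ᵥ v) := by
  rw [add_mulVec, dotProduct_add, dotProduct_mulVec v Aᵀ, vecMul_transpose, dotProduct_comm]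
  ring

lemma pow_sum_dotProduct_mulVec_mul_le_trace [DecidableEq m] {ι : Type*} [Fintype ι]
    (A : ι → Matrix m m ℝ) (g : ι → ℝ) {v : m → ℝ} {s : ℝ} (hv : v ⬝ᵥ v ≤ s) (q : ℕ) :
    (∑ i, (v ⬝ᵥ A i *ᵥ v) * g i) ^ 2 ^ (q + 1) ≤
      (s / 2) ^ 2 ^ (q + 1) * trace ((∑ i, g i • (A i + (A i)ᵀ)) ^ 2 ^ (q + 1)) := by
  set M := ∑ i, g i • (A i + (A i)ᵀ)
  have hM : M.IsSymm := by simp [M, IsSymm, transpose_sum, add_comm]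
  have hquad : ∑ i, (v ⬝ᵥ A i *ᵥ v) * g i = (v ⬝ᵥ M *ᵥ v) / 2 := by
    simp only [M, sum_mulVec, dotProduct_sum, smul_mulVec, dotProduct_smul,
      dotProduct_add_transpose_mulVec, smul_eq_mul, sum_div]
    exact sum_congr rfl fun i _ => by ring
  rw [hquad, div_pow, div_pow, div_mul_eq_mul_div]
  gcongr
  exact hM.dotProduct_mulVec_pow_le_trace hv q

end QuadraticForm

section ExpectedTrace

variable {m ι : Type*} [Fintype m] [Fintype ι]

lemma Matrix.abs_trace_le_card_mul_linfty_opNorm (P : Matrix m m ℝ) :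
    |trace P| ≤ Fintype.card m * ‖P‖ := by
  have hdiag : ∀ r, ‖P r r‖₊ ≤ ‖P‖₊ := fun r => by
    rw [linfty_opNNNorm_def]
    exact (single_le_sum (fun c _ => zero_le) (mem_univ r)).trans
      (le_sup (f := fun i => ∑ j, ‖P i j‖₊) (mem_univ r))
  calc |trace P| ≤ ∑ r, |P r r| := abs_sum_le_sum_abs _ _
    _ ≤ ∑ _r : m, ‖P‖ := sum_le_sum fun r _ => hdiag r
    _ = Fintype.card m * ‖P‖ := by simp

lemma Matrix.linfty_opNorm_list_prod_ofFn_le [DecidableEq m] {N : ℕ}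
    (S : Fin N → Matrix m m ℝ) {c : ℝ} (hS : ∀ j, ‖S j‖ ≤ c) :
    ‖(List.ofFn S).prod‖ ≤ c ^ N := by
  induction N with
  | zero =>
    rw [List.ofFn_zero, List.prod_nil, pow_zero, ← diagonal_one, linfty_opNorm_diagonal]
    exact (pi_norm_const_le (1 : ℝ)).trans norm_one.le
  | succ N ih =>
    rw [List.ofFn_succ, List.prod_cons, pow_succ']
    exact (linfty_opNorm_mul _ _).trans (mul_le_mul (hS 0) (ih _ fun j => hS j.succ)
      (norm_nonneg _) ((norm_nonneg _).trans (hS 0)))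

lemma sum_smul_pow_eq_sum_smul_list_prod {R A : Type*} [CommSemiring R] [Semiring A]
    [Algebra R A] (g : ι → R) (S : ι → A) (N : ℕ) :
    (∑ i, g i • S i) ^ N =
      ∑ f : Fin N → ι, (∏ j, g (f j)) • (List.ofFn fun j => S (f j)).prod := by
  classical
  rw [← MultilinearMap.mkPiAlgebraFin_apply_const (R := R), MultilinearMap.map_sum]
  simp [MultilinearMap.map_smul_univ]

lemma trace_sum_smul_pow [DecidableEq m] (S : ι → Matrix m m ℝ) (g : ι → ℝ) (N : ℕ) :
    trace ((∑ i, g i • S i) ^ N) =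
      ∑ f : Fin N → ι, (∏ j, g (f j)) * trace (List.ofFn fun j => S (f j)).prod := by
  simp [sum_smul_pow_eq_sum_smul_list_prod, trace_sum]

lemma integrable_trace_sum_smul_pow [DecidableEq m] (S : ι → Matrix m m ℝ) (N : ℕ) :
    Integrable (fun g => trace ((∑ i, g i • S i) ^ N)) (stdGaussianPi ι) := by
  simp_rw [trace_sum_smul_pow]
  exact integrable_finsetSum _ fun f _ => (integrable_monomial_stdGaussianPi f).mul_const _

lemma integral_trace_sum_smul_pow_le [DecidableEq m] (S : ι → Matrix m m ℝ) {c : ℝ}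
    (hS : ∀ i, ‖S i‖ ≤ c) (N : ℕ) :
    ∫ g, trace ((∑ i, g i • S i) ^ N) ∂stdGaussianPi ι ≤
      Fintype.card m * c ^ N * ∫ g, (∑ i, g i) ^ N ∂stdGaussianPi ι := by
  have htrace : ∀ f : Fin N → ι, trace (List.ofFn fun j => S (f j)).prod ≤
      Fintype.card m * c ^ N := fun f =>
    (le_abs_self _).trans <| (abs_trace_le_card_mul_linfty_opNorm _).trans <| by
      gcongr
      exact linfty_opNorm_list_prod_ofFn_le _ fun j => hS (f j)
  simp_rw [trace_sum_smul_pow, Fintype.sum_pow]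
  rw [integral_finsetSum _ fun f _ => (integrable_monomial_stdGaussianPi f).mul_const _,
    integral_finsetSum _ fun f _ => integrable_monomial_stdGaussianPi f, mul_sum]
  gcongr with f
  rw [integral_mul_const, mul_comm]
  exact mul_le_mul_of_nonneg_right (htrace f) (integral_monomial_stdGaussianPi_nonneg f)

end ExpectedTrace

lemma rpow_inv_natCast_le_one_add {y : ℝ} (hy : 0 ≤ y) (N : ℕ) :
    y ^ (N : ℝ)⁻¹ ≤ 1 + y := by
  rcases le_total y 1 with h | h
  · linarith [rpow_le_one hy h (by positivity : (0 : ℝ) ≤ (N : ℝ)⁻¹)]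
  · calc y ^ (N : ℝ)⁻¹ ≤ y ^ (1 : ℝ) := rpow_le_rpow_of_exponent_le h (Nat.cast_inv_le_one N)
      _ ≤ 1 + y := by rw [rpow_one]; linarith

lemma integral_le_of_pow_le {α : Type*} [MeasurableSpace α] {μ : Measure α}
    [IsProbabilityMeasure μ] {Z Y : α → ℝ} {N : ℕ} {D : ℝ} (hN : N ≠ 0) (hD : 0 ≤ D)
    (hZ : ∀ a, 0 ≤ Z a) (hZY : ∀ a, Z a ^ N ≤ Y a) (hY : Integrable Y μ)
    (hYD : ∫ a, Y a ∂μ ≤ D ^ N) : ∫ a, Z a ∂μ ≤ D := by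
  have hY0 : ∀ a, 0 ≤ Y a := fun a => (pow_nonneg (hZ a) N).trans (hZY a)
  have hroot : ∀ a, Z a ≤ Y a ^ (N : ℝ)⁻¹ := fun a => by
    rw [← pow_rpow_inv_natCast (hZ a) hN]
    exact rpow_le_rpow (pow_nonneg (hZ a) N) (hZY a) (by positivity)
  have hint : Integrable (fun a => Y a ^ (N : ℝ)⁻¹) μ := by
    refine ((integrable_const 1).add hY).mono' ?_ (ae_of_all _ fun a => ?_)
    · exact (continuous_rpow_const (by positivity)).comp_aestronglyMeasurable
        hY.aestronglyMeasurable
    · rw [norm_of_nonneg (rpow_nonneg (hY0 a) _)]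
      exact rpow_inv_natCast_le_one_add (hY0 a) N
  have hjensen : ∫ a, Y a ^ (N : ℝ)⁻¹ ∂μ ≤ (∫ a, Y a ∂μ) ^ (N : ℝ)⁻¹ :=
    (concaveOn_rpow (by positivity) (Nat.cast_inv_le_one N)).le_map_integral
      (continuous_rpow_const (by positivity)).continuousOn isClosed_Ici
      (ae_of_all _ hY0) hY hint
  calc ∫ a, Z a ∂μ ≤ ∫ a, Y a ^ (N : ℝ)⁻¹ ∂μ :=
        integral_mono_of_nonneg (ae_of_all _ hZ) hint (ae_of_all _ hroot)
    _ ≤ (∫ a, Y a ∂μ) ^ (N : ℝ)⁻¹ := hjensen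
    _ ≤ (D ^ N) ^ (N : ℝ)⁻¹ := rpow_le_rpow (integral_nonneg hY0) hYD (by positivity)
    _ = D := pow_rpow_inv_natCast hD hN

lemma Matrix.linfty_opNorm_le_of_zero_one {m n : Type*} [Fintype m] [Fintype n]
    {A : Matrix m n ℝ} {t : ℕ} (h01 : ∀ r c, A r c = 0 ∨ A r c = 1)
    (hrow : ∀ r, Nat.card {c | A r c = 1} ≤ t) : ‖A‖ ≤ t := by
  classical
  have hsum : ∀ r, ∑ c, ‖A r c‖₊ = #{c | A r c = 1} := fun r => by
    rw [natCast_card_filter]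
    refine sum_congr rfl fun c _ => ?_
    rcases h01 r c with h | h <;> simp [h]
  have hcard : ∀ r, #{c | A r c = 1} ≤ t := fun r => by
    simpa [Nat.card_eq_fintype_card, Fintype.card_subtype] using hrow r
  rw [linfty_opNorm_def, ← NNReal.coe_natCast, NNReal.coe_le_coe]
  exact Finset.sup_le fun r _ => (hsum r).trans_le (by exact_mod_cast hcard r)

lemma sum_sum_mul_mul_eq_dotProduct_mulVec {m : Type*} [Fintype m] (A : Matrix m m ℝ)
    (v : m → ℝ) : ∑ r, ∑ c, A r c * v c * v r = v ⬝ᵥ A *ᵥ v := by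
  simp only [dotProduct, mulVec, mul_sum]
  exact sum_congr rfl fun r _ => sum_congr rfl fun c _ => by ring

lemma sup'_pow_le_trace_pow {ι : Type*} [Fintype ι] {n : ℕ} (A : ι → Matrix (Fin n) (Fin n) ℝ)
    (g : ι → ℝ) (q : ℕ) :
    (univ.sup' univ_nonempty fun x : Fin n → Bool =>
        ∑ i, (∑ r, ∑ c, A i r c * (if x c then (1 : ℝ) else 0) * (if x r then 1 else 0)) * g i) ^
          2 ^ (q + 1) ≤
      ((n : ℝ) / 2) ^ 2 ^ (q + 1) * trace ((∑ i, g i • (A i + (A i)ᵀ)) ^ 2 ^ (q + 1)) := by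
  obtain ⟨x, -, hx⟩ := exists_mem_eq_sup' univ_nonempty fun x : Fin n → Bool =>
    ∑ i, (∑ r, ∑ c, A i r c * (if x c then (1 : ℝ) else 0) * (if x r then 1 else 0)) * g i
  have hv : (fun c => if x c then (1 : ℝ) else 0) ⬝ᵥ (fun c => if x c then 1 else 0) ≤ n :=
    (sum_le_sum fun c _ => show _ ≤ (1 : ℝ) by dsimp only; split_ifs <;> norm_num).trans_eq
      (by simp)
  rw [hx]
  simp_rw [sum_sum_mul_mul_eq_dotProduct_mulVec (A _) (fun c => if x c then (1 : ℝ) else 0)]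
  exact pow_sum_dotProduct_mulVec_mul_le_trace A g hv q

lemma exists_two_pow_le_log {n : ℕ} (hn : 2 ≤ n) :
    ∃ q : ℕ, n ≤ 4 ^ 2 ^ q ∧ (2 * 2 ^ q : ℝ) ≤ 3 * log n := by
  set L := Nat.log 2 n
  have hL : L ≠ 0 := (Nat.log_pos one_lt_two hn).ne'
  refine ⟨Nat.log 2 L, ?_, ?_⟩
  · calc n ≤ 2 ^ (L + 1) := (Nat.lt_pow_succ_log_self one_lt_two n).le
      _ ≤ 2 ^ (2 * 2 ^ Nat.log 2 L) := Nat.pow_le_pow_right two_pos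
          (by rw [← pow_succ']; exact Nat.lt_pow_succ_log_self one_lt_two L)
      _ = 4 ^ 2 ^ Nat.log 2 L := by rw [pow_mul]; norm_num
  · have h2q : (2 ^ Nat.log 2 L : ℝ) ≤ L := by exact_mod_cast Nat.pow_log_le_self 2 hL
    have hLn : L * log 2 ≤ log n := by
      rw [← log_pow]
      exact log_le_log (by positivity) (by exact_mod_cast Nat.pow_log_le_self 2 (by omega))
    nlinarith [log_two_gt_d9]

lemma moment_bound_le_twelve_pow {n t k h : ℕ} (hh : 1 ≤ h) (hn : n ≤ 4 ^ h)
    (hlog : (2 * h : ℝ) ≤ 3 * log n) :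
    ((n : ℝ) / 2) ^ (2 * h) * (n * (2 * t) ^ (2 * h) * (2 * (exp 1 * (2 * h) * k) ^ h)) ≤
      (12 * (t * n) * √(k * log n)) ^ (2 * h) := by
  have hlogn : 0 ≤ log n := by positivity
  have hn16 : 2 * (n : ℝ) ≤ 16 ^ h := by
    calc 2 * (n : ℝ) ≤ 4 ^ h * 4 ^ h := by
          gcongr
          · exact le_self_pow₀ (by norm_num : (1 : ℝ) ≤ 4) (by omega) |>.trans' (by norm_num)
          · exact_mod_cast hn
      _ = 16 ^ h := by rw [← mul_pow]; norm_num
  have he : exp 1 * (2 * h) * k ≤ 9 * (k * log n) := by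
    have h3 : exp 1 * (2 * h) ≤ 9 * log n := by
      nlinarith [exp_one_lt_d9, (by positivity : (0 : ℝ) ≤ 2 * h)]
    nlinarith [(by positivity : (0 : ℝ) ≤ k)]
  have htn : ((n : ℝ) / 2) ^ 2 * (2 * t) ^ 2 = (t * n) ^ 2 := by ring
  calc ((n : ℝ) / 2) ^ (2 * h) * (n * (2 * t) ^ (2 * h) * (2 * (exp 1 * (2 * h) * k) ^ h))
      = ((t * n) ^ 2) ^ h * (2 * n) * (exp 1 * (2 * h) * k) ^ h := by
        rw [pow_mul, pow_mul, ← htn, mul_pow]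
        generalize ((n : ℝ) / 2) ^ 2 = a
        ring
    _ ≤ ((t * n) ^ 2) ^ h * 16 ^ h * (9 * (k * log n)) ^ h := by gcongr
    _ = (12 * (t * n) * √(k * log n)) ^ (2 * h) := by
        rw [pow_mul, mul_pow _ (√_), sq_sqrt (by positivity), ← mul_pow, ← mul_pow]
        congr 1
        ring

/-- quadratic case.  There is an absolute constant `C > 0` such that
for all `n ≥ 2`, `k`, `t`: if `A_1, …, A_k ∈ {0,1}^{n×n}` have at most `t` ones in every
row and in every column, and `ψ : ℝ^n → ℝ^k` has coordinates `ψ_i(x) = ⟨A_i x, x⟩`, then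
`gw(ψ({0,1}^n)) ≤ C · t n · √(k log n)`. -/
theorem quadratic_gaussian_width :
    ∃ C : ℝ, 0 < C ∧
      ∀ n k t : ℕ, 2 ≤ n →
        ∀ A : Fin k → Matrix (Fin n) (Fin n) ℝ,
          (∀ i r c, A i r c = 0 ∨ A i r c = 1) →
          (∀ i r, Nat.card {c : Fin n | A i r c = 1} ≤ t) →
          (∀ i c, Nat.card {r : Fin n | A i r c = 1} ≤ t) →
          (∫ g : Fin k → ℝ,
              (Finset.univ.sup' Finset.univ_nonempty fun x : Fin n → Bool =>
                ∑ i, (∑ r, ∑ c, A i r c * (if x c then (1 : ℝ) else 0) *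
                  (if x r then (1 : ℝ) else 0)) * g i)
              ∂(Measure.pi fun _ : Fin k => gaussianReal 0 1)) ≤
            C * ((t : ℝ) * n) * Real.sqrt ((k : ℝ) * Real.log n) := by
  refine ⟨12, by norm_num, fun n k t hn A h01 hrow hcol => ?_⟩
  obtain ⟨q, hn4, hlog⟩ := exists_two_pow_le_log hn
  set S : Fin k → Matrix (Fin n) (Fin n) ℝ := fun i => A i + (A i)ᵀ
  have hS : ∀ i, ‖S i‖ ≤ 2 * t := fun i => by
    have hA := linfty_opNorm_le_of_zero_one (h01 i) (hrow i)
    have hAt := linfty_opNorm_le_of_zero_one (A := (A i)ᵀ) (fun r c => h01 i c r) (hcol i)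
    linarith [norm_add_le (A i) (A i)ᵀ]
  have hint := (integrable_trace_sum_smul_pow S (2 ^ (q + 1))).const_mul
    (((n : ℝ) / 2) ^ 2 ^ (q + 1))
  refine integral_le_of_pow_le (by positivity) (by positivity)
    (fun g => le_sup'_of_le _ (mem_univ fun _ => false) (by simp))
    (fun g => sup'_pow_le_trace_pow A g q) hint ?_
  rw [integral_const_mul, pow_succ']
  calc _ ≤ ((n : ℝ) / 2) ^ (2 * 2 ^ q) * (n * (2 * t) ^ (2 * 2 ^ q) *
        ∫ g, (∑ i, g i) ^ (2 * 2 ^ q) ∂stdGaussianPi (Fin k)) := by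
        gcongr
        simpa only [Fintype.card_fin] using integral_trace_sum_smul_pow_le S hS (2 * 2 ^ q)
    _ ≤ ((n : ℝ) / 2) ^ (2 * 2 ^ q) * (n * (2 * t) ^ (2 * 2 ^ q) *
        (2 * (exp 1 * (2 * 2 ^ q : ℕ) * k) ^ 2 ^ q)) := by
        gcongr
        simpa using integral_sum_pow_stdGaussianPi_le (ι := Fin k) (Nat.two_pow_pos q)
    _ ≤ _ := by
        simpa using moment_bound_le_twelve_pow (t := t) (k := k) Nat.one_le_two_pow hn4
          (by exact_mod_cast hlog)
end
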